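/- arXiv:2211.02021 — 4 statements merged into one kernel-verified Lean document; each statement's English description precedes it below -/
import Mathlib

section
/- None of the 14 alignment-free 2-uniform sock orderings whose associated permutations are 54123, 1234, 2314, 54132, 1243, 3124, 54213, 1324, 3142, 45132, 2134, 3214, 45213, 2143 (i.e., the sock orderings represented by the words 12345 54123, 1234 1234, 1234 2314, 12345 54132, 1234 1243, 1234 3124, 12345 54213, 1234 1324, 1234 3142, 12345 45132, 1234 2134, 1234 3214, 12345 45213, 1234 2143) is foot-sortable. -/
/-- Two words represent the same sock ordering iff they have the same length and the
same pattern of letter equalities. -/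
def SockEquiv (w v : List ℕ) : Prop :=
  w.length = v.length ∧ ∀ i j, i < w.length → j < w.length →
    (w.getD i 0 = w.getD j 0 ↔ v.getD i 0 = v.getD j 0)

theorem sockEquiv_refl (w : List ℕ) : SockEquiv w w :=
  ⟨rfl, fun _ _ _ _ => Iff.rfl⟩

theorem sockEquiv_symm {w v : List ℕ} (h : SockEquiv w v) : SockEquiv v w := by
  obtain ⟨hl, he⟩ := h
  exact ⟨hl.symm, fun i j hi hj => (he i j (by omega) (by omega)).symm⟩

theorem sockEquiv_trans {u v w : List ℕ} (h1 : SockEquiv u v) (h2 : SockEquiv v w) :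
    SockEquiv u w := by
  obtain ⟨hl1, he1⟩ := h1
  obtain ⟨hl2, he2⟩ := h2
  exact ⟨hl1.trans hl2, fun i j hi hj =>
    (he1 i j hi hj).trans (he2 i j (by omega) (by omega))⟩

instance sockSetoid : Setoid (List ℕ) :=
  ⟨SockEquiv, ⟨sockEquiv_refl, sockEquiv_symm, sockEquiv_trans⟩⟩

/-- A sock ordering is an equivalence class of words. -/
def SockOrdering : Type := Quotient sockSetoid

/-- The length of a sock ordering. -/
def SockOrdering.length : SockOrdering → ℕ :=
  Quotient.lift List.length fun _ _ h => h.1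

/-- One step of the (nondeterministic) one-stack (one-foot) sorting procedure, acting on
(input, stack, output) triples: push the leftmost input letter onto the stack, or pop
the top letter of the stack onto the right end of the output. -/
inductive StackStep : List ℕ × List ℕ × List ℕ → List ℕ × List ℕ × List ℕ → Prop
  | push (a : ℕ) (inp st out : List ℕ) :
      StackStep (a :: inp, st, out) (inp, a :: st, out)
  | pop (a : ℕ) (inp st out : List ℕ) :
      StackStep (inp, a :: st, out) (inp, st, out ++ [a])

/-- `out` is obtainable from `w` by one pass through a stack. -/
def IsStackOutput (w out : List ℕ) : Prop :=
  Relation.ReflTransGen StackStep (w, [], []) ([], [], out)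

/-- A word has all equal letters consecutive, i.e. it represents a sorted sock ordering. -/
def SortedWordSock (w : List ℕ) : Prop :=
  ∀ i j k, i < j → j < k → k < w.length →
    w.getD i 0 = w.getD k 0 → w.getD i 0 = w.getD j 0

/-- A sock ordering is sorted if some (equivalently, every) word representing it has all
equal letters consecutive. -/
def SockOrdering.IsSorted (ρ : SockOrdering) : Prop :=
  ∃ w : List ℕ, (⟦w⟧ : SockOrdering) = ρ ∧ SortedWordSock w

/-- `foot ρ` is the set of sock orderings represented by the outputs obtainable by
one pass of foot-sorting applied to a word representing `ρ`. -/
def foot (ρ : SockOrdering) : Set SockOrdering :=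
  {κ | ∃ w out : List ℕ, (⟦w⟧ : SockOrdering) = ρ ∧ IsStackOutput w out ∧
    (⟦out⟧ : SockOrdering) = κ}

/-- Iterated foot-sorting: `footIter 0 ρ = {ρ}` and
`footIter (t+1) ρ = ⋃ κ ∈ footIter t ρ, foot κ`. -/
def footIter : ℕ → SockOrdering → Set SockOrdering
  | 0, ρ => {ρ}
  | t + 1, ρ => ⋃ κ ∈ footIter t ρ, foot κ

/-- A sock ordering is `t`-foot-sortable if `foot^t ρ` contains a sorted sock ordering. -/
def FootSortable (t : ℕ) (ρ : SockOrdering) : Prop :=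
  ∃ κ ∈ footIter t ρ, κ.IsSorted

/-- `ρ` has exactly `n` colors. -/
def HasColors (ρ : SockOrdering) (n : ℕ) : Prop :=
  ∃ w : List ℕ, (⟦w⟧ : SockOrdering) = ρ ∧ w.toFinset.card = n

/-- `ρ` is `r`-uniform: every color appears exactly `r` times. -/
def RUniform (r : ℕ) (ρ : SockOrdering) : Prop :=
  ∃ w : List ℕ, (⟦w⟧ : SockOrdering) = ρ ∧ ∀ a ∈ w, w.count a = r

/-- `ρ` contains `ρ'` as a (sock) pattern: some word representing `ρ` has a subsequence
representing `ρ'`. -/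
def Contains (ρ ρ' : SockOrdering) : Prop :=
  ∃ w u : List ℕ, (⟦w⟧ : SockOrdering) = ρ ∧ u.Sublist w ∧ (⟦u⟧ : SockOrdering) = ρ'

/-- A word is stratified with `n` colors and `r` blocks: it is the concatenation of `r`
blocks of length `n`, each containing every color exactly once. -/
def StratifiedWord (n r : ℕ) (w : List ℕ) : Prop :=
  ∃ blocks : List (List ℕ), blocks.length = r ∧ w = blocks.flatten ∧
    ∀ b ∈ blocks, b.length = n ∧ b.Nodup ∧ b.toFinset = w.toFinset

/-- An `r`-uniform stratified sock ordering with `n` colors. -/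
def IsStratified (n r : ℕ) (ρ : SockOrdering) : Prop :=
  ∃ w : List ℕ, (⟦w⟧ : SockOrdering) = ρ ∧ StratifiedWord n r w

/-- The word `σ(1) σ(2) ⋯ σ(n)` (with values written in `{1,…,n}`). -/
def permWord (n : ℕ) (σ : Equiv.Perm (Fin n)) : List ℕ :=
  (List.finRange n).map fun i => (σ i : ℕ) + 1

/-- The word `1 2 ⋯ n σ(1) σ(2) ⋯ σ(n)` representing the alignment-free 2-uniform sock
ordering associated with `σ`. -/
def afWord (n : ℕ) (σ : Equiv.Perm (Fin n)) : List ℕ :=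
  ((List.finRange n).map fun i => (i : ℕ) + 1) ++ permWord n σ

/-- A word `w` contains the (permutation) pattern `p`: some subsequence of `w` of the same
length as `p` is order-isomorphic to `p`. -/
def ContainsPattern (w p : List ℕ) : Prop :=
  ∃ s : List ℕ, s.Sublist w ∧ s.length = p.length ∧
    ∀ i j, i < s.length → j < s.length →
      (s.getD i 0 < s.getD j 0 ↔ p.getD i 0 < p.getD j 0)

def AvoidsPattern (w p : List ℕ) : Prop := ¬ ContainsPattern w p

/-- A word avoids the permutation patterns 123, 132, and 213. -/
def Avoids123_132_213 (w : List ℕ) : Prop :=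
  AvoidsPattern w [1, 2, 3] ∧ AvoidsPattern w [1, 3, 2] ∧ AvoidsPattern w [2, 1, 3]

/-- A word avoids the pattern 231: there are no indices `i < j < k` with `w k < w i < w j`. -/
def Avoids231 (w : List ℕ) : Prop :=
  ¬ ∃ i j k, i < j ∧ j < k ∧ k < w.length ∧
    w.getD k 0 < w.getD i 0 ∧ w.getD i 0 < w.getD j 0

/-- The 14 words representing the alignment-free 2-uniform sock orderings associated with the
permutations 54123, 1234, 2314, 54132, 1243, 3124, 54213, 1324, 3142, 45132, 2134, 3214,
45213, 2143. -/
def fourteenWords : List (List ℕ) :=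
  [[1,2,3,4,5,5,4,1,2,3], [1,2,3,4,1,2,3,4], [1,2,3,4,2,3,1,4],
   [1,2,3,4,5,5,4,1,3,2], [1,2,3,4,1,2,4,3], [1,2,3,4,3,1,2,4],
   [1,2,3,4,5,5,4,2,1,3], [1,2,3,4,1,3,2,4], [1,2,3,4,3,1,4,2],
   [1,2,3,4,5,4,5,1,3,2], [1,2,3,4,2,1,3,4], [1,2,3,4,3,2,1,4],
   [1,2,3,4,5,4,5,2,1,3], [1,2,3,4,2,1,4,3]]

/-! ### Auxiliary machinery -/

/-- All possible output suffixes from state `(inp, st)`, with fuel. -/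
def outsF : ℕ → List ℕ → List ℕ → List (List ℕ)
  | 0, _, _ => []
  | _+1, [], [] => [[]]
  | f+1, [], b :: st => (outsF f [] st).map (b :: ·)
  | f+1, a :: inp, [] => outsF f inp [a]
  | f+1, a :: inp, b :: st =>
      outsF f inp (a :: b :: st) ++ (outsF f (a :: inp) st).map (b :: ·)

/-- `goodB done cur suf`: appending `suf` after a sorted word whose finished colors are
`done` and whose current (last) color is `cur` keeps all equal letters consecutive. -/
def goodB : List ℕ → ℕ → List ℕ → Bool
  | _, _, [] => true
  | done, cur, b :: suf =>
    if b = cur then goodB done cur suf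
    else if b ∈ done then false
    else goodB (cur :: done) b suf

/-- Pruned search: every output suffix reachable from `(inp, st)` breaks sortedness. -/
def ok : ℕ → List ℕ → List ℕ → List ℕ → ℕ → Bool
  | 0, _, _, _, _ => false
  | _+1, [], [], _, _ => false
  | f+1, [], b :: st, done, cur =>
    if b = cur then ok f [] st done cur
    else if b ∈ done then true
    else ok f [] st (cur :: done) b
  | f+1, a :: inp, [], done, cur => ok f inp [a] done cur
  | f+1, a :: inp, b :: st, done, cur =>
    ok f inp (a :: b :: st) done cur &&
    (if b = cur then ok f (a :: inp) st done cur
     else if b ∈ done then true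
     else ok f (a :: inp) st (cur :: done) b)

theorem ok_correct : ∀ f inp st done cur, ok f inp st done cur = true →
    ∀ suf ∈ outsF f inp st, goodB done cur suf = false := by
  intro f
  induction f with
  | zero => intro inp st done cur _ suf hsuf; simp [outsF] at hsuf
  | succ f ih =>
    intro inp st done cur hok suf hsuf
    match inp, st with
    | [], [] =>
      simp [ok] at hok
    | [], b :: st =>
      simp only [outsF, List.mem_map] at hsuf
      obtain ⟨suf', hsuf', rfl⟩ := hsuf
      simp only [ok] at hok
      by_cases hbc : b = cur
      · simp only [goodB, if_pos hbc]
        rw [if_pos hbc] at hok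
        exact ih [] st done cur hok suf' hsuf'
      · rw [if_neg hbc] at hok
        simp only [goodB, if_neg hbc]
        by_cases hbd : b ∈ done
        · simp [hbd]
        · rw [if_neg hbd] at hok
          simp only [hbd, if_false]
          exact ih [] st (cur :: done) b hok suf' hsuf'
    | a :: inp, [] =>
      simp only [outsF] at hsuf
      simp only [ok] at hok
      exact ih inp [a] done cur hok suf hsuf
    | a :: inp, b :: st =>
      simp only [outsF, List.mem_append, List.mem_map] at hsuf
      simp only [ok, Bool.and_eq_true] at hok
      rcases hsuf with hsuf | ⟨suf', hsuf', rfl⟩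
      · exact ih inp (a :: b :: st) done cur hok.1 suf hsuf
      · have hok2 := hok.2
        by_cases hbc : b = cur
        · simp only [goodB, if_pos hbc]
          rw [if_pos hbc] at hok2
          exact ih (a :: inp) st done cur hok2 suf' hsuf'
        · rw [if_neg hbc] at hok2
          simp only [goodB, if_neg hbc]
          by_cases hbd : b ∈ done
          · simp [hbd]
          · rw [if_neg hbd] at hok2
            simp only [hbd, if_false]
            exact ih (a :: inp) st (cur :: done) b hok2 suf' hsuf'

theorem outsF_mono : ∀ g f, f ≤ g → ∀ inp st, outsF f inp st ⊆ outsF g inp st := by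
  intro g
  induction g with
  | zero => intro f hf inp st; interval_cases f; exact fun _ h => h
  | succ g ih =>
    intro f hf inp st
    match f with
    | 0 => intro x hx; simp [outsF] at hx
    | f+1 =>
      have hfg : f ≤ g := by omega
      match inp, st with
      | [], [] => exact fun x hx => hx
      | [], b :: st =>
        simp only [outsF]
        exact List.map_subset _ (ih f hfg [] st)
      | a :: inp, [] =>
        simp only [outsF]
        exact ih f hfg inp [a]
      | a :: inp, b :: st =>
        simp only [outsF]
        intro x hx
        rcases List.mem_append.1 hx with hx | hx
        · exact List.mem_append.2 (Or.inl (ih f hfg inp (a :: b :: st) hx))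
        · exact List.mem_append.2 (Or.inr (List.map_subset _ (ih f hfg (a :: inp) st) hx))

theorem outsF_push (f : ℕ) (a : ℕ) (inp st : List ℕ) :
    outsF f inp (a :: st) ⊆ outsF (f+1) (a :: inp) st := by
  cases st with
  | nil => exact fun x hx => hx
  | cons b st => exact fun x hx => List.mem_append.2 (Or.inl hx)

theorem outsF_pop (f : ℕ) (b : ℕ) (inp st : List ℕ) (suf : List ℕ)
    (h : suf ∈ outsF f inp st) : b :: suf ∈ outsF (f+1) inp (b :: st) := by
  cases inp with
  | nil => exact List.mem_map.2 ⟨suf, h, rfl⟩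
  | cons a inp => exact List.mem_append.2 (Or.inr (List.mem_map.2 ⟨suf, h, rfl⟩))

theorem outsF_complete {out' : List ℕ} :
    ∀ {s : List ℕ × List ℕ × List ℕ},
      Relation.ReflTransGen StackStep s ([], [], out') →
      ∃ suf ∈ outsF (2 * s.1.length + s.2.1.length + 1) s.1 s.2.1, out' = s.2.2 ++ suf := by
  intro s h
  induction h using Relation.ReflTransGen.head_induction_on with
  | refl => exact ⟨[], by simp [outsF], by simp⟩
  | head hstep _ ih =>
    rename_i a c
    cases hstep with
    | push x inp st out =>
      obtain ⟨suf, hsuf, heq⟩ := ih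
      refine ⟨suf, ?_, heq⟩
      have h1 := outsF_push (2 * inp.length + (x :: st).length + 1) x inp st hsuf
      refine outsF_mono _ _ ?_ _ _ h1
      simp only [List.length_cons]
      omega
    | pop x inp st out =>
      obtain ⟨suf, hsuf, heq⟩ := ih
      refine ⟨x :: suf, ?_, by simp [heq]⟩
      have h1 := outsF_pop (2 * inp.length + st.length + 1) x inp st suf hsuf
      refine outsF_mono _ _ ?_ _ _ h1
      simp only [List.length_cons]
      omega

/-- Sortedness implies `goodB` under suitable invariants. -/
theorem sorted_goodB : ∀ (suf : List ℕ) (done : List ℕ) (cur : ℕ),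
    SortedWordSock suf →
    (∀ d ∈ done, d ∉ suf) →
    (∀ j k, j < k → k < suf.length → suf.getD j 0 ≠ cur → suf.getD k 0 ≠ cur) →
    goodB done cur suf = true := by
  intro suf
  induction suf with
  | nil => intro done cur _ _ _; rfl
  | cons b rest ih =>
    intro done cur hs hd hc
    have hs' : SortedWordSock rest := by
      intro i j k h1 h2 h3 heq
      have := hs (i+1) (j+1) (k+1) (by omega) (by omega)
        (by simp only [List.length_cons]; omega)
      simp only [List.getD_cons_succ] at this
      exact this heq
    by_cases hbc : b = cur
    · simp only [goodB, if_pos hbc]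
      refine ih done cur hs' (fun d hdm => fun hmem => hd d hdm (List.mem_cons_of_mem _ hmem)) ?_
      intro j k h1 h2 h3 h4
      have := hc (j+1) (k+1) (by omega) (by simp only [List.length_cons]; omega)
      simp only [List.getD_cons_succ] at this
      exact this h3 h4
    · have hbd : b ∉ done := fun hmem => hd b hmem (List.mem_cons_self)
      simp only [goodB, if_neg hbc, if_neg hbd]
      refine ih (cur :: done) b hs' ?_ ?_
      · intro d hdm
        rcases List.mem_cons.1 hdm with rfl | hdm
        · -- cur ∉ rest
          intro hmem
          obtain ⟨i, hi, hig⟩ := List.mem_iff_getElem.1 hmem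
          have h0 : (b :: rest).getD 0 0 ≠ d := by
            simp only [List.getD_cons_zero]; exact hbc
          have := hc 0 (i+1) (by omega) (by simp only [List.length_cons]; omega) h0
          simp only [List.getD_cons_succ] at this
          rw [List.getD_eq_getElem rest 0 hi, hig] at this
          exact this rfl
        · exact fun hmem => hd d hdm (List.mem_cons_of_mem _ hmem)
      · -- no return to b within rest
        intro j k h1 h2 h3 hk
        have hglen : k < rest.length := h2
        have hkk : (b :: rest).getD (k+1) 0 = b := by
          simp only [List.getD_cons_succ]; exact hk
        have h0k : (b :: rest).getD 0 0 = (b :: rest).getD (k+1) 0 := by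
          simp only [List.getD_cons_zero]; exact hkk.symm
        have := hs 0 (j+1) (k+1) (by omega) (by omega)
          (by simp only [List.length_cons]; omega) h0k
        simp only [List.getD_cons_zero, List.getD_cons_succ] at this
        exact h3 this.symm

/-- Transfer sortedness across sock equivalence. -/
theorem sorted_of_equiv {u v : List ℕ} (h : SockEquiv u v) (hv : SortedWordSock v) :
    SortedWordSock u := by
  obtain ⟨hl, he⟩ := h
  intro i j k h1 h2 h3 heq
  have hik := (he i k (by omega) (by omega)).1 heq
  have := hv i j k h1 h2 (by omega) hik
  exact (he i j (by omega) (by omega)).2 this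

theorem stackStep_map (f : ℕ → ℕ) {s t : List ℕ × List ℕ × List ℕ} (h : StackStep s t) :
    StackStep (s.1.map f, s.2.1.map f, s.2.2.map f) (t.1.map f, t.2.1.map f, t.2.2.map f) := by
  cases h with
  | push a inp st out => exact StackStep.push (f a) (inp.map f) (st.map f) (out.map f)
  | pop a inp st out =>
    have := StackStep.pop (f a) (inp.map f) (st.map f) (out.map f)
    simpa using this

theorem isStackOutput_map (f : ℕ → ℕ) {w out : List ℕ} (h : IsStackOutput w out) :
    IsStackOutput (w.map f) (out.map f) := by
  unfold IsStackOutput at *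
  have : ∀ s t : List ℕ × List ℕ × List ℕ, Relation.ReflTransGen StackStep s t →
      Relation.ReflTransGen StackStep (s.1.map f, s.2.1.map f, s.2.2.map f)
        (t.1.map f, t.2.1.map f, t.2.2.map f) := by
    intro s t h
    induction h with
    | refl => exact Relation.ReflTransGen.refl
    | tail _ hstep ih => exact ih.tail (stackStep_map f hstep)
  simpa using this _ _ h

theorem output_mem {w out : List ℕ} (h : IsStackOutput w out) : ∀ x ∈ out, x ∈ w := by
  unfold IsStackOutput at h
  have key : ∀ t : List ℕ × List ℕ × List ℕ, Relation.ReflTransGen StackStep (w, [], []) t →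
      ∀ x, (x ∈ t.1 ∨ x ∈ t.2.1 ∨ x ∈ t.2.2) → x ∈ w := by
    intro t ht
    induction ht with
    | refl => intro x hx; rcases hx with hx | hx | hx <;> simp_all
    | tail _ hstep ih =>
      intro x hx
      cases hstep with
      | push a inp st out =>
        apply ih
        rcases hx with hx | hx | hx
        · exact Or.inl (List.mem_cons_of_mem _ hx)
        · rcases List.mem_cons.1 hx with rfl | hx
          · exact Or.inl (List.mem_cons_self)
          · exact Or.inr (Or.inl hx)
        · exact Or.inr (Or.inr hx)
      | pop a inp st out =>
        apply ih
        rcases hx with hx | hx | hx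
        · exact Or.inl hx
        · exact Or.inr (Or.inl (List.mem_cons_of_mem _ hx))
        · rcases List.mem_append.1 hx with hx | hx
          · exact Or.inr (Or.inr hx)
          · simp at hx
            subst hx
            exact Or.inr (Or.inl (List.mem_cons_self))
  intro x hx
  exact key _ h x (Or.inr (Or.inr hx))

/-- The relabeling map induced by a sock equivalence. -/
theorem unfoot (p : List ℕ) (hp0 : ∀ x ∈ p, x ≠ 0)
    (hok : ok (2 * p.length + 1) p [] [] 0 = true) :
    ¬ FootSortable 1 (⟦p⟧ : SockOrdering) := by
  rintro ⟨κ, hκmem, v, hv, hvsorted⟩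
  simp only [footIter, Set.mem_iUnion, Set.mem_singleton_iff, exists_prop]
    at hκmem
  obtain ⟨κ', hκ', hfoot⟩ := hκmem
  subst hκ'
  obtain ⟨w, out, hw, hstack, hout⟩ := hfoot
  -- SortedWordSock out
  have hvo : SockEquiv v out := Quotient.exact (hv.trans hout.symm)
  have hsorted : SortedWordSock out := by
    have hov : SockEquiv out v := sockEquiv_symm hvo
    exact sorted_of_equiv hov hvsorted
  -- relabeling
  have hwp : SockEquiv w p := Quotient.exact hw
  obtain ⟨hlen, he⟩ := hwp
  set f : ℕ → ℕ := fun a => p.getD (w.idxOf a) 0 with hf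
  have hgetw : ∀ a ∈ w, w.getD (w.idxOf a) 0 = a := by
    intro a ha
    have hlt : w.idxOf a < w.length := List.idxOf_lt_length_iff.2 ha
    rw [List.getD_eq_getElem w 0 hlt]
    exact List.getElem_idxOf hlt
  have hfinj : ∀ a ∈ w, ∀ b ∈ w, f a = f b → a = b := by
    intro a ha b hb hfe
    have hla : w.idxOf a < w.length := List.idxOf_lt_length_iff.2 ha
    have hlb : w.idxOf b < w.length := List.idxOf_lt_length_iff.2 hb
    have := (he (w.idxOf a) (w.idxOf b) hla hlb).2 hfe
    rw [hgetw a ha, hgetw b hb] at this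
    exact this
  have hmapwp : w.map f = p := by
    apply List.ext_getElem
    · simpa using hlen
    intro i hi1 hi2
    have hiw : i < w.length := by simpa using hi1
    rw [List.getElem_map]
    have haw : w[i] ∈ w := List.getElem_mem _
    have hla : w.idxOf w[i] < w.length := List.idxOf_lt_length_iff.2 haw
    have heqw : w.getD (w.idxOf w[i]) 0 = w.getD i 0 := by
      rw [hgetw _ haw, List.getD_eq_getElem w 0 hiw]
    have h2 : p.getD (w.idxOf w[i]) 0 = p.getD i 0 := (he (w.idxOf w[i]) i hla hiw).1 heqw
    exact h2.trans (List.getD_eq_getElem p 0 (by omega))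
  -- mapped output
  have hstack' : IsStackOutput p (out.map f) := by
    have := isStackOutput_map f hstack
    rwa [hmapwp] at this
  have houtw : ∀ x ∈ out, x ∈ w := output_mem hstack
  -- sortedness of mapped output
  have hsorted' : SortedWordSock (out.map f) := by
    intro i j k h1 h2 h3 heq
    have hk : k < out.length := by simpa using h3
    have hi : i < out.length := by omega
    have hj : j < out.length := by omega
    have hmget : ∀ m (hm : m < out.length), (out.map f).getD m 0 = f out[m] := by
      intro m hm
      rw [List.getD_eq_getElem _ 0 (by simpa using hm), List.getElem_map]
    rw [hmget i hi, hmget k hk] at heq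
    have hik : out[i] = out[k] :=
      hfinj _ (houtw _ (List.getElem_mem _)) _ (houtw _ (List.getElem_mem _)) heq
    have : out.getD i 0 = out.getD j 0 := by
      apply hsorted i j k h1 h2 hk
      rw [List.getD_eq_getElem _ 0 hi, List.getD_eq_getElem _ 0 hk, hik]
    rw [List.getD_eq_getElem _ 0 hi, List.getD_eq_getElem _ 0 hj] at this
    rw [hmget i hi, hmget j hj, this]
  -- mapped output letters lie in p
  have hmem' : ∀ x ∈ out.map f, x ∈ p := by
    intro x hx
    obtain ⟨a, ha, rfl⟩ := List.mem_map.1 hx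
    have haw : a ∈ w := houtw a ha
    have hla : w.idxOf a < w.length := List.idxOf_lt_length_iff.2 haw
    have : f a = p[w.idxOf a]'(by omega) := List.getD_eq_getElem p 0 (by omega)
    rw [this]
    exact List.getElem_mem _
  -- goodB holds for mapped output
  have hgood : goodB [] 0 (out.map f) = true := by
    apply sorted_goodB _ _ _ hsorted' (by simp)
    intro j k h1 h2 _
    have hk : (out.map f).getD k 0 ∈ out.map f := by
      rw [List.getD_eq_getElem _ 0 h2]
      exact List.getElem_mem _
    exact hp0 _ (hmem' _ hk)
  -- but ok says all outputs are bad
  have hin : out.map f ∈ outsF (2 * p.length + 1) p [] := by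
    have := outsF_complete (s := (p, [], [])) hstack'
    obtain ⟨suf, hsuf, heq⟩ := this
    simp only [List.nil_append] at heq
    simpa [← heq] using hsuf
  have := ok_correct _ _ _ _ _ hok _ hin
  rw [hgood] at this
  exact Bool.noConfusion this


/-- none of the 14 listed sock orderings is foot-sortable. -/
theorem fourteen_not_footSortable :
    ∀ p ∈ fourteenWords, ¬ FootSortable 1 (⟦p⟧ : SockOrdering) := by
  have hdec : ∀ p ∈ fourteenWords,
      (∀ x ∈ p, x ≠ 0) ∧ ok (2 * p.length + 1) p [] [] 0 = true := by decide
  intro p hp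
  exact unfoot p (hdec p hp).1 (hdec p hp).2
end

section
/- Let n ≥ 1 and let ρ be an alignment-free 2-uniform sock ordering of length 2n with associated permutation σ_ρ ∈ S_n. If either σ_ρ(1) < n and σ_ρ(2) ⋯ σ_ρ(n) avoids the permutation patterns 123, 132, 213, or σ_ρ(1) = n and σ_ρ(3) ⋯ σ_ρ(n) avoids the permutation patterns 123, 132, 213, then ρ is foot-sortable. -/
-- ===== auxiliary machinery =====

def dbl : List ℕ → List ℕ
  | [] => []
  | a :: l => a :: a :: dbl l

lemma dbl_length (L : List ℕ) : (dbl L).length = 2 * L.length := by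
  induction L with
  | nil => simp [dbl]
  | cons a l ih => simp [dbl, ih]; omega

lemma dbl_getD (L : List ℕ) (i : ℕ) : (dbl L).getD i 0 = L.getD (i/2) 0 := by
  induction L generalizing i with
  | nil => simp [dbl]
  | cons a l ih =>
    match i with
    | 0 => simp [dbl]
    | 1 => simp [dbl]
    | (i+2) =>
      have h2 : (i+2)/2 = i/2 + 1 := by omega
      simp only [dbl, List.getD_cons_succ, ih, h2]

lemma sorted_dbl {L : List ℕ} (h : L.Nodup) : SortedWordSock (dbl L) := by
  intro i j k hij hjk hk hik
  have hlen := dbl_length L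
  have hk2 : k/2 < L.length := by omega
  have hi2 : i/2 < L.length := by omega
  rw [dbl_getD, dbl_getD, List.getD_eq_getElem _ _ hi2, List.getD_eq_getElem _ _ hk2] at hik
  have hik2 : i/2 = k/2 := h.getElem_inj_iff.mp hik
  have hj2 : j/2 = i/2 := by omega
  rw [dbl_getD, dbl_getD, hj2]

inductive ND : List ℕ → Prop
  | nil : ND []
  | single (a : ℕ) : ND [a]
  | cons (a b : ℕ) (l : List ℕ) (h : ∀ x ∈ l, x < a) (h2 : ND (b :: l)) : ND (a :: b :: l)

lemma nd_tail {a : ℕ} {l : List ℕ} (h : ND (a :: l)) : ND l := by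
  cases h with
  | single => exact ND.nil
  | cons _ b l h h2 => exact h2

lemma push_run (l : List ℕ) : ∀ (inp st out : List ℕ),
    Relation.ReflTransGen StackStep (l ++ inp, st, out) (inp, l.reverse ++ st, out) := by
  induction l with
  | nil => intro inp st out; simpa using Relation.ReflTransGen.refl
  | cons a l ih =>
    intro inp st out
    have h : (a :: l).reverse ++ st = l.reverse ++ (a :: st) := by simp
    rw [h]
    exact Relation.ReflTransGen.head (StackStep.push a (l ++ inp) st out) (ih inp (a :: st) out)

lemma runH : ∀ (N : ℕ) (E s out : List ℕ), E.length ≤ N → List.Pairwise (· > ·) s → ND E →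
    E.Perm s →
    ∃ L, E.Perm L ∧ Relation.ReflTransGen StackStep (E, s, out) ([], [], out ++ dbl L) := by
  intro N
  induction N with
  | zero =>
    intro E s out hlen hs hnd hp
    have hE : E = [] := List.eq_nil_of_length_eq_zero (by omega)
    subst hE
    have hseq : s = [] := hp.symm.eq_nil
    subst hseq
    exact ⟨[], List.Perm.refl _, by simpa [dbl] using Relation.ReflTransGen.refl⟩
  | succ N ih =>
    intro E s out hlen hs hnd hp
    match E with
    | [] =>
      have hseq : s = [] := hp.symm.eq_nil
      subst hseq
      exact ⟨[], List.Perm.refl _, by simpa [dbl] using Relation.ReflTransGen.refl⟩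
    | e :: E' =>
      match s with
      | [] => exact absurd hp.length_eq (by simp)
      | t :: s' =>
        have hts' : ∀ x ∈ s', t > x := (List.pairwise_cons.mp hs).1
        by_cases het : e = t
        · subst het
          obtain ⟨L', hpL, hrun⟩ := ih E' s' ((out ++ [e]) ++ [e])
            (by simp at hlen ⊢; omega) hs.of_cons (nd_tail hnd) hp.cons_inv
          refine ⟨e :: L', hpL.cons e, ?_⟩
          have hout : out ++ dbl (e :: L') = ((out ++ [e]) ++ [e]) ++ dbl L' := by simp [dbl]
          rw [hout]
          exact Relation.ReflTransGen.head (StackStep.pop e (e :: E') s' out)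
            (Relation.ReflTransGen.head (StackStep.push e E' s' (out ++ [e]))
              (Relation.ReflTransGen.head (StackStep.pop e E' s' (out ++ [e])) hrun))
        · -- e ≠ t
          have htmem : t ∈ e :: E' := hp.symm.subset (List.mem_cons_self (a := t) (l := s'))
          have htE' : t ∈ E' := by
            rcases List.mem_cons.mp htmem with h | h
            · exact absurd h.symm het
            · exact h
          have hes : e ∈ s' := by
            have : e ∈ t :: s' := hp.subset (List.mem_cons_self (a := e) (l := E'))
            rcases List.mem_cons.mp this with h | h
            · exact absurd h het
            · exact h
          have hte : t > e := hts' e hes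
          match E' with
          | [] => simp at htE'
          | b :: E'' =>
            have hbt : t = b := by
              by_contra hbt
              have htE'' : t ∈ E'' := by
                rcases List.mem_cons.mp htE' with h | h
                · exact absurd h.symm fun hh => hbt hh.symm
                · exact h
              have hlt : t < e := by
                cases hnd with
                | cons _ _ _ h _ => exact h t htE''
              omega
            subst hbt
            -- E = e :: t :: E''
            have hE''lt : ∀ x ∈ E'', x < e := by
              cases hnd with
              | cons _ _ _ h _ => exact h
            have hperm2 : (e :: E'').Perm s' := by
              have h1 : (e :: t :: E'').Perm (t :: e :: E'') := List.Perm.swap t e E''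
              exact (h1.symm.trans hp).cons_inv
            match s' with
            | [] => simp at hes
            | h' :: s'' =>
              have hh'e : e = h' := by
                have hh'mem : h' ∈ e :: E'' := hperm2.symm.subset (List.mem_cons_self (a := h') (l := s''))
                rcases List.mem_cons.mp hh'mem with h | h
                · exact h.symm
                · -- h' ∈ E'' so h' < e; but e ∈ h' :: s''
                  have hh'lt : h' < e := hE''lt h' h
                  rcases List.mem_cons.mp hes with h2 | h2
                  · exact h2
                  · have : h' > e := (List.pairwise_cons.mp hs.of_cons).1 e h2
                    omega
              subst hh'e
              obtain ⟨L'', hpL, hrun⟩ := ih E'' s'' ((((out ++ [t]) ++ [t]) ++ [e]) ++ [e])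
                (by simp at hlen ⊢; omega) hs.of_cons.of_cons
                (nd_tail (nd_tail hnd)) hperm2.cons_inv
              refine ⟨t :: e :: L'', ?_, ?_⟩
              · exact (List.Perm.swap t e E'').trans ((hpL.cons e).cons t)
              · have hout : out ++ dbl (t :: e :: L'') =
                    ((((out ++ [t]) ++ [t]) ++ [e]) ++ [e]) ++ dbl L'' := by simp [dbl]
                rw [hout]
                refine Relation.ReflTransGen.head
                  (StackStep.pop t (e :: t :: E'') (e :: s'') out) ?_
                refine Relation.ReflTransGen.head
                  (StackStep.push e (t :: E'') (e :: s'') (out ++ [t])) ?_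
                refine Relation.ReflTransGen.head
                  (StackStep.push t E'' (e :: e :: s'') (out ++ [t])) ?_
                refine Relation.ReflTransGen.head
                  (StackStep.pop t E'' (e :: e :: s'') (out ++ [t])) ?_
                refine Relation.ReflTransGen.head
                  (StackStep.pop e E'' (e :: s'') ((out ++ [t]) ++ [t])) ?_
                refine Relation.ReflTransGen.head
                  (StackStep.pop e E'' s'' (((out ++ [t]) ++ [t]) ++ [e])) ?_
                exact hrun

lemma containsPattern_of_sublist {w v p : List ℕ} (h : ContainsPattern w p)
    (hw : w.Sublist v) : ContainsPattern v p := by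
  obtain ⟨s, hs, hl, hord⟩ := h
  exact ⟨s, hs.trans hw, hl, hord⟩

lemma avoids_of_sublist {w v : List ℕ} (h : Avoids123_132_213 v) (hw : w.Sublist v) :
    Avoids123_132_213 w :=
  ⟨fun hc => h.1 (containsPattern_of_sublist hc hw),
   fun hc => h.2.1 (containsPattern_of_sublist hc hw),
   fun hc => h.2.2 (containsPattern_of_sublist hc hw)⟩

lemma nd_of_avoids : ∀ {w : List ℕ}, w.Nodup → Avoids123_132_213 w → ND w := by
  intro w
  induction w with
  | nil => exact fun _ _ => ND.nil
  | cons a l ih =>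
    intro hnd hav
    match l with
    | [] => exact ND.single a
    | b :: l' =>
      have htail : ND (b :: l') :=
        ih (List.Nodup.of_cons hnd) (avoids_of_sublist hav (List.sublist_cons_self a _))
      refine ND.cons a b l' ?_ htail
      intro x hx
      by_contra hlt
      push_neg at hlt
      have hne : a ≠ x := fun h => (List.nodup_cons.mp hnd).1 (h ▸ List.mem_cons_of_mem b hx)
      have hax : a < x := lt_of_le_of_ne hlt hne
      have hsub : [a, b, x].Sublist (a :: b :: l') :=
        List.Sublist.cons₂ a (List.Sublist.cons₂ b (List.singleton_sublist.mpr hx))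
      have hab : a ≠ b := fun h => (List.nodup_cons.mp hnd).1 (h ▸ List.mem_cons_self (a := b) (l := l'))
      have hbx : b ≠ x :=
        fun h => (List.nodup_cons.mp (List.Nodup.of_cons hnd)).1 (h ▸ hx)
      rcases lt_trichotomy b a with h1 | h1 | h1
      · -- b < a < x : pattern 213
        exact hav.2.2 ⟨[a, b, x], hsub, rfl, by
          intro i j hi hj
          simp only [List.length_cons, List.length_nil] at hi hj
          interval_cases i <;> interval_cases j <;>
            simp [List.getD_cons_zero, List.getD_cons_succ] <;> omega⟩
      · exact hab h1.symm
      · rcases lt_trichotomy b x with h2 | h2 | h2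
        · -- a < b < x : pattern 123
          exact hav.1 ⟨[a, b, x], hsub, rfl, by
            intro i j hi hj
            simp only [List.length_cons, List.length_nil] at hi hj
            interval_cases i <;> interval_cases j <;>
              simp [List.getD_cons_zero, List.getD_cons_succ] <;> omega⟩
        · exact hbx h2
        · -- a < x < b : pattern 132
          exact hav.2.1 ⟨[a, b, x], hsub, rfl, by
            intro i j hi hj
            simp only [List.length_cons, List.length_nil] at hi hj
            interval_cases i <;> interval_cases j <;>
              simp [List.getD_cons_zero, List.getD_cons_succ] <;> omega⟩

lemma footSortable_of_run {w L : List ℕ} (hrun : IsStackOutput w (dbl L)) (hnd : L.Nodup) :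
    FootSortable 1 (⟦w⟧ : SockOrdering) := by
  refine ⟨⟦dbl L⟧, ?_, ⟨dbl L, rfl, sorted_dbl hnd⟩⟩
  have hmem : (⟦dbl L⟧ : SockOrdering) ∈ foot ⟦w⟧ := ⟨w, dbl L, rfl, hrun, rfl⟩
  show _ ∈ ⋃ κ ∈ footIter 0 (⟦w⟧ : SockOrdering), foot κ
  exact Set.mem_biUnion rfl hmem

lemma permWord_length (n : ℕ) (σ : Equiv.Perm (Fin n)) : (permWord n σ).length = n := by
  simp [permWord]

lemma permWord_nodup (n : ℕ) (σ : Equiv.Perm (Fin n)) : (permWord n σ).Nodup := by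
  refine List.Nodup.map ?_ (List.nodup_finRange n)
  intro i j hij
  simp only [add_left_inj] at hij
  exact σ.injective (Fin.ext hij)

lemma permWord_perm (n : ℕ) (σ : Equiv.Perm (Fin n)) :
    (permWord n σ).Perm (List.range' 1 n) := by
  refine List.Subperm.perm_of_length_le (List.subperm_of_subset (permWord_nodup n σ) ?_)
    (by simp [permWord_length])
  intro x hx
  simp only [permWord, List.mem_map, List.mem_finRange, true_and] at hx
  obtain ⟨i, rfl⟩ := hx
  rw [List.mem_range'_1]
  have := (σ i).isLt
  omega

lemma map_finRange_eq_range' (n : ℕ) :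
    ((List.finRange n).map fun i => (i : ℕ) + 1) = List.range' 1 n := by
  simp
  rw [← List.map_eq_flatMap, List.map_map]
  apply List.ext_getElem
  · simp
  · intro i h1 h2
    simp only [List.getElem_map, List.getElem_finRange, Fin.coe_cast, Function.comp,
      List.getElem_range'_1]
    omega

lemma pairwise_gt_stack {a k b m : ℕ} (h : b + m ≤ a) :
    List.Pairwise (· > ·) ((List.range' a k).reverse ++ (List.range' b m).reverse) := by
  rw [List.pairwise_append]
  refine ⟨?_, ?_, ?_⟩
  · rw [List.pairwise_reverse]
    exact (List.pairwise_lt_range' (s := a) (n := k)).imp fun h => h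
  · rw [List.pairwise_reverse]
    exact (List.pairwise_lt_range' (s := b) (n := m)).imp fun h => h
  · intro x hx y hy
    rw [List.mem_reverse, List.mem_range'_1] at hx hy
    omega

/-- every spread-out alignment-free 2-uniform sock ordering is foot-sortable. -/
theorem footSortable_of_spreadOut (n : ℕ) (hn : 1 ≤ n) (σ : Equiv.Perm (Fin n))
    (h : (((σ ⟨0, hn⟩ : Fin n) : ℕ) + 1 < n ∧ Avoids123_132_213 ((permWord n σ).drop 1)) ∨
         (((σ ⟨0, hn⟩ : Fin n) : ℕ) + 1 = n ∧ Avoids123_132_213 ((permWord n σ).drop 2))) :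
    FootSortable 1 (⟦afWord n σ⟧ : SockOrdering) := by
  classical
  have hPlen : (permWord n σ).length = n := permWord_length n σ
  have hPnodup : (permWord n σ).Nodup := permWord_nodup n σ
  have hPperm : (permWord n σ).Perm (List.range' 1 n) := permWord_perm n σ
  have h0 : 0 < (permWord n σ).length := by omega
  have hp0 : (permWord n σ)[0]'h0 = ((σ ⟨0, hn⟩ : Fin n) : ℕ) + 1 := by
    simp [permWord]
  have hword : afWord n σ = List.range' 1 n ++ permWord n σ := by
    rw [afWord, map_finRange_eq_range']
  rcases h with ⟨hlt, hav⟩ | ⟨heq, hav⟩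
  · -- Case 1 : σ(1) < n
    set c : ℕ := ((σ ⟨0, hn⟩ : Fin n) : ℕ) + 1 with hc
    set T : List ℕ := (permWord n σ).drop 1 with hT
    have hc1 : 1 ≤ c := by omega
    have hsplit : permWord n σ = c :: T := by
      conv_lhs => rw [← List.drop_zero (l := permWord n σ),
        ← List.getElem_cons_drop h0]
      rw [hp0]
    set A1 : List ℕ := List.range' 1 (c - 1) with hA1
    set A2 : List ℕ := List.range' (c + 1) (n - c) with hA2
    have hsplitc : List.range' 1 c = A1 ++ [c] := by
      have h := List.range'_1_concat (s := 1) (n := c - 1)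
      rw [show c - 1 + 1 = c from by omega, show 1 + (c - 1) = c from by omega] at h
      exact h
    have hsplitn : List.range' 1 n = List.range' 1 c ++ A2 := by
      have h := List.range'_append_1 (s := 1) (m := c) (n := n - c)
      rw [show c + (n - c) = n from by omega] at h
      rw [← h, hA2, show 1 + c = c + 1 from by omega]
    have hword2 : afWord n σ = (A1 ++ [c]) ++ (A2 ++ (c :: T)) := by
      rw [hword, hsplitn, hsplitc, hsplit, List.append_assoc]
    -- the run
    have r1 : Relation.ReflTransGen StackStep (afWord n σ, [], [])
        (A2 ++ (c :: T), c :: A1.reverse, []) := by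
      rw [hword2]
      simpa using push_run (A1 ++ [c]) (A2 ++ (c :: T)) [] []
    have r2 : Relation.ReflTransGen StackStep (A2 ++ (c :: T), c :: A1.reverse, [])
        (c :: T, A2.reverse ++ A1.reverse, [] ++ [c]) :=
      Relation.ReflTransGen.head (StackStep.pop c (A2 ++ (c :: T)) A1.reverse [])
        (push_run A2 (c :: T) A1.reverse ([] ++ [c]))
    have r3 : Relation.ReflTransGen StackStep (c :: T, A2.reverse ++ A1.reverse, [] ++ [c])
        (T, A2.reverse ++ A1.reverse, ([] ++ [c]) ++ [c]) :=
      Relation.ReflTransGen.head (StackStep.push c T (A2.reverse ++ A1.reverse) ([] ++ [c]))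
        (Relation.ReflTransGen.single
          (StackStep.pop c T (A2.reverse ++ A1.reverse) ([] ++ [c])))
    -- invariants for runH
    have hTnodup : T.Nodup := List.Nodup.sublist (List.drop_sublist 1 _) hPnodup
    have hnd : ND T := nd_of_avoids hTnodup hav
    have hpermT : T.Perm (A2.reverse ++ A1.reverse) := by
      have h1 : (c :: T).Perm (A1 ++ (c :: A2)) := by
        rw [hsplitn, hsplitc] at hPperm
        rw [← hsplit]
        simpa using hPperm
      have h2 : T.Perm (A1 ++ A2) := (h1.trans List.perm_middle).cons_inv
      exact h2.trans ((List.perm_append_comm).trans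
        (((List.reverse_perm A2).symm).append ((List.reverse_perm A1).symm)))
    have hs : List.Pairwise (· > ·) (A2.reverse ++ A1.reverse) :=
      pairwise_gt_stack (by omega)
    obtain ⟨L, hpL, hrun⟩ := runH T.length T (A2.reverse ++ A1.reverse)
      (([] ++ [c]) ++ [c]) le_rfl hs hnd hpermT
    have hfull : IsStackOutput (afWord n σ) (dbl (c :: L)) := by
      have hout : (([] ++ [c]) ++ [c]) ++ dbl L = dbl (c :: L) := by simp [dbl]
      rw [IsStackOutput, ← hout]
      exact r1.trans (r2.trans (r3.trans hrun))
    have hcT : c ∉ T := by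
      have := hPnodup
      rw [hsplit, List.nodup_cons] at this
      exact this.1
    refine footSortable_of_run hfull ?_
    rw [List.nodup_cons]
    exact ⟨fun hmem => hcT (hpL.symm.subset hmem), hpL.nodup_iff.mp hTnodup⟩
  · -- Case 2 : σ(1) = n
    by_cases hn1 : n = 1
    · -- n = 1
      subst hn1
      have hP1 : permWord 1 σ = [1] := by
        obtain ⟨a, ha⟩ := List.length_eq_one_iff.mp hPlen
        have h2 : (permWord 1 σ)[0]'h0 = a := by simp [ha]
        rw [h2] at hp0
        rw [ha, show a = 1 by omega]
      have hword2 : afWord 1 σ = [1] ++ [1] := by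
        rw [hword, hP1]
        simp [List.range'_one]
      have hfull : IsStackOutput (afWord 1 σ) (dbl [1]) := by
        rw [IsStackOutput, hword2]
        refine Relation.ReflTransGen.head (StackStep.push 1 [1] [] []) ?_
        refine Relation.ReflTransGen.head (StackStep.pop 1 [1] [] []) ?_
        refine Relation.ReflTransGen.head (StackStep.push 1 [] [] ([] ++ [1])) ?_
        have hout : dbl [1] = ([] ++ [1]) ++ [1] := by simp [dbl]
        rw [hout]
        exact Relation.ReflTransGen.single (StackStep.pop 1 [] [] ([] ++ [1]))
      exact footSortable_of_run hfull (by simp)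
    · -- n ≥ 2
      have h2n : 2 ≤ n := by omega
      have h1n : 1 < n := by omega
      set c : ℕ := ((σ ⟨1, h1n⟩ : Fin n) : ℕ) + 1 with hc
      have hc1 : 1 ≤ c := by omega
      have hcn : c < n := by
        have hle : ((σ ⟨1, h1n⟩ : Fin n) : ℕ) < n := (σ ⟨1, h1n⟩).isLt
        rcases eq_or_lt_of_le (Nat.succ_le_of_lt hle) with hceq | hlt
        · exfalso
          have hvals : σ ⟨0, hn⟩ = σ ⟨1, h1n⟩ := Fin.ext (by omega)
          have := σ.injective hvals
          simp [Fin.ext_iff] at this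
        · exact hlt
      have h1 : 1 < (permWord n σ).length := by omega
      have hp1 : (permWord n σ)[1]'h1 = c := by
        simp [permWord, hc]
      set T : List ℕ := (permWord n σ).drop 2 with hT
      have hsplit : permWord n σ = n :: c :: T := by
        conv_lhs => rw [← List.drop_zero (l := permWord n σ),
          ← List.getElem_cons_drop h0,
          ← List.getElem_cons_drop h1]
        rw [hp0, hp1, heq]
      set A1 : List ℕ := List.range' 1 (c - 1) with hA1
      set A2 : List ℕ := List.range' (c + 1) (n - 1 - c) with hA2
      have hsplitc : List.range' 1 c = A1 ++ [c] := by
        have h := List.range'_1_concat (s := 1) (n := c - 1)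
        rw [show c - 1 + 1 = c from by omega, show 1 + (c - 1) = c from by omega] at h
        exact h
      have hsplitn2 : List.range' (c + 1) (n - c) = A2 ++ [n] := by
        have h := List.range'_1_concat (s := c + 1) (n := n - c - 1)
        rw [show n - c - 1 + 1 = n - c from by omega,
          show c + 1 + (n - c - 1) = n from by omega] at h
        rw [h, hA2, show n - c - 1 = n - 1 - c from by omega]
      have hsplitn : List.range' 1 n = List.range' 1 c ++ (A2 ++ [n]) := by
        have h := List.range'_append_1 (s := 1) (m := c) (n := n - c)
        rw [show c + (n - c) = n from by omega] at h
        rw [← h, show 1 + c = c + 1 from by omega, hsplitn2]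
      have hword2 : afWord n σ = (A1 ++ [c]) ++ ((A2 ++ [n]) ++ (n :: c :: T)) := by
        rw [hword, hsplitn, hsplitc, hsplit, List.append_assoc]
      -- the run
      have r1 : Relation.ReflTransGen StackStep (afWord n σ, [], [])
          ((A2 ++ [n]) ++ (n :: c :: T), c :: A1.reverse, []) := by
        rw [hword2]
        simpa using push_run (A1 ++ [c]) ((A2 ++ [n]) ++ (n :: c :: T)) [] []
      have r2 : Relation.ReflTransGen StackStep
          ((A2 ++ [n]) ++ (n :: c :: T), c :: A1.reverse, [])
          (n :: c :: T, n :: (A2.reverse ++ A1.reverse), [] ++ [c]) := by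
        refine Relation.ReflTransGen.head
          (StackStep.pop c ((A2 ++ [n]) ++ (n :: c :: T)) A1.reverse []) ?_
        have h := push_run (A2 ++ [n]) (n :: c :: T) A1.reverse ([] ++ [c])
        simpa using h
      have r3 : Relation.ReflTransGen StackStep
          (n :: c :: T, n :: (A2.reverse ++ A1.reverse), [] ++ [c])
          (T, A2.reverse ++ A1.reverse, (((([] ++ [c]) ++ [c]) ++ [n]) ++ [n])) := by
        refine Relation.ReflTransGen.head
          (StackStep.push n (c :: T) (n :: (A2.reverse ++ A1.reverse)) ([] ++ [c])) ?_
        refine Relation.ReflTransGen.head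
          (StackStep.push c T (n :: n :: (A2.reverse ++ A1.reverse)) ([] ++ [c])) ?_
        refine Relation.ReflTransGen.head
          (StackStep.pop c T (n :: n :: (A2.reverse ++ A1.reverse)) ([] ++ [c])) ?_
        refine Relation.ReflTransGen.head
          (StackStep.pop n T (n :: (A2.reverse ++ A1.reverse)) (([] ++ [c]) ++ [c])) ?_
        exact Relation.ReflTransGen.single
          (StackStep.pop n T (A2.reverse ++ A1.reverse) ((([] ++ [c]) ++ [c]) ++ [n]))
      -- invariants for runH
      have hTnodup : T.Nodup := List.Nodup.sublist (List.drop_sublist 2 _) hPnodup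
      have hnd : ND T := nd_of_avoids hTnodup hav
      have hpermT : T.Perm (A2.reverse ++ A1.reverse) := by
        have h1 : (n :: c :: T).Perm (A1 ++ (c :: (A2 ++ [n]))) := by
          rw [hsplitn, hsplitc] at hPperm
          rw [← hsplit]
          simpa using hPperm
        have h2 : (n :: c :: T).Perm (c :: (A1 ++ (A2 ++ [n]))) :=
          h1.trans List.perm_middle
        have h3 : (c :: (A1 ++ (A2 ++ [n]))).Perm (c :: n :: (A1 ++ A2)) := by
          refine List.Perm.cons c ?_
          rw [← List.append_assoc]
          exact List.perm_append_comm
        have h4 : (c :: n :: T).Perm (c :: n :: (A1 ++ A2)) := by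
          refine List.Perm.trans ?_ (h2.trans h3)
          exact List.Perm.swap n c T
        have h5 : T.Perm (A1 ++ A2) := h4.cons_inv.cons_inv
        exact h5.trans ((List.perm_append_comm).trans
          (((List.reverse_perm A2).symm).append ((List.reverse_perm A1).symm)))
      have hs : List.Pairwise (· > ·) (A2.reverse ++ A1.reverse) :=
        pairwise_gt_stack (by omega)
      obtain ⟨L, hpL, hrun⟩ := runH T.length T (A2.reverse ++ A1.reverse)
        (((([] ++ [c]) ++ [c]) ++ [n]) ++ [n]) le_rfl hs hnd hpermT
      have hfull : IsStackOutput (afWord n σ) (dbl (c :: n :: L)) := by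
        have hout : ((((([] ++ [c]) ++ [c]) ++ [n]) ++ [n])) ++ dbl L = dbl (c :: n :: L) := by
          simp [dbl]
        rw [IsStackOutput, ← hout]
        exact r1.trans (r2.trans (r3.trans hrun))
      have hPn : (n :: c :: T).Nodup := hsplit ▸ hPnodup
      rw [List.nodup_cons, List.nodup_cons] at hPn
      refine footSortable_of_run hfull ?_
      rw [List.nodup_cons, List.nodup_cons]
      refine ⟨?_, ?_, hpL.nodup_iff.mp hTnodup⟩
      · simp only [List.mem_cons]
        push_neg
        exact ⟨by omega, fun hmem => hPn.2.1 (hpL.symm.subset hmem)⟩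
      · exact fun hmem => hPn.1 (List.mem_cons_of_mem c (hpL.symm.subset hmem))
end

section
/- Define r : {2,3,4,…} → ℕ by r(2) = 2 and r(n) = r(⌈n/2⌉)²·binom(n, ⌈n/2⌉) for n ≥ 3. Then for every integer n ≥ 2, no r(n)-uniform stratified sock ordering with n colors is (⌈log₂(n)⌉ − 1)-foot-sortable. -/
/-- The uniformity function: `r 2 = 2` and `r n = r(⌈n/2⌉)² · C(n, ⌈n/2⌉)` for `n ≥ 3`. -/
def rFun (n : ℕ) : ℕ :=
  if n ≤ 2 then 2
  else rFun ((n + 1) / 2) ^ 2 * n.choose ((n + 1) / 2)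
termination_by n
decreasing_by omega


abbrev SRun := Relation.ReflTransGen StackStep

theorem srun_out_mono {st st' : List ℕ × List ℕ × List ℕ} (h : SRun st st') :
    ∃ d, st'.2.2 = st.2.2 ++ d := by
  induction h with
  | refl => exact ⟨[], by simp⟩
  | tail _ hstep ih =>
    obtain ⟨d, hd⟩ := ih
    cases hstep with
    | push a inp s o => exact ⟨d, hd⟩
    | pop a inp s o =>
      refine ⟨d ++ [a], ?_⟩
      show o ++ [a] = _
      rw [← List.append_assoc, ← hd]

theorem srun_prepend (p : List ℕ) {st fin : List ℕ × List ℕ × List ℕ}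
    (h : SRun st fin) : SRun (st.1, st.2.1, p ++ st.2.2) (fin.1, fin.2.1, p ++ fin.2.2) := by
  induction h using Relation.ReflTransGen.head_induction_on with
  | refl => exact .refl
  | @head st st' hstep _ ih =>
    cases hstep with
    | push a inp stk out => exact .head (.push a inp stk (p ++ out)) ih
    | pop a inp stk out =>
      refine .head (.pop a inp stk (p ++ out)) ?_
      simpa [List.append_assoc] using ih

theorem srun_perm {st st' : List ℕ × List ℕ × List ℕ} (h : SRun st st') :
    (st.1 ++ st.2.1 ++ st.2.2).Perm (st'.1 ++ st'.2.1 ++ st'.2.2) := by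
  induction h with
  | refl => exact .refl _
  | tail _ hstep ih =>
    refine ih.trans ?_
    cases hstep with
    | push a inp s o =>
      simp only [List.append_assoc]
      exact List.perm_middle.symm
    | pop a inp s o =>
      simp only [List.append_assoc]
      refine List.Perm.append_left inp ?_
      exact List.perm_middle.symm.trans
        (List.Perm.append_left s (List.perm_append_singleton a o).symm)

theorem srun_split {y out : List ℕ} :
    ∀ {st : List ℕ × List ℕ × List ℕ}, SRun st ([], [], out) →
    ∀ x s o, st = (x ++ y, s, o) →
    ∃ s' o', SRun (x, s, o) ([], s', o') ∧ SRun (y, s', o') ([], [], out) := by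
  intro st h
  induction h using Relation.ReflTransGen.head_induction_on with
  | refl =>
    intro x s o heq
    simp only [Prod.mk.injEq] at heq
    obtain ⟨h1, h2, h3⟩ := heq
    obtain ⟨hx, hy⟩ := List.append_eq_nil_iff.mp h1.symm
    subst hx hy h2 h3
    exact ⟨[], out, .refl, .refl⟩
  | @head st st' hstep hrun ih =>
    intro x s o heq
    cases hstep with
    | push a inp stk o₀ =>
      simp only [Prod.mk.injEq] at heq
      obtain ⟨h1, h2, h3⟩ := heq
      subst h2
      subst h3
      cases x with
      | nil =>
        simp only [List.nil_append] at h1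
        subst h1
        exact ⟨stk, o₀, .refl, .head (.push a inp stk o₀) hrun⟩
      | cons b x' =>
        simp only [List.cons_append, List.cons.injEq] at h1
        obtain ⟨hb, hinp⟩ := h1
        subst hb
        obtain ⟨s', o', hr1, hr2⟩ := ih x' (a :: stk) o₀ (by rw [hinp])
        exact ⟨s', o', .head (.push a x' stk o₀) hr1, hr2⟩
    | pop a inp stk o₀ =>
      simp only [Prod.mk.injEq] at heq
      obtain ⟨h1, h2, h3⟩ := heq
      subst h3
      obtain ⟨s', o', hr1, hr2⟩ := ih x stk (o₀ ++ [a]) (by rw [h1])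
      refine ⟨s', o', ?_, hr2⟩
      rw [← h2]
      exact .head (.pop a x stk o₀) hr1

/-- The stack contents pop out, in order, somewhere in the remaining output. -/
theorem srun_stack_tail {out : List ℕ} :
    ∀ {st : List ℕ × List ℕ × List ℕ}, SRun st ([], [], out) →
    ∃ tail, out = st.2.2 ++ tail ∧ st.2.1.Sublist tail := by
  intro st h
  induction h using Relation.ReflTransGen.head_induction_on with
  | refl => exact ⟨[], by simp⟩
  | @head st st' hstep hrun ih =>
    cases hstep with
    | push a inp stk o₀ =>
      obtain ⟨tail, h1, h2⟩ := ih
      exact ⟨tail, h1, (List.sublist_cons_self a stk).trans h2⟩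
    | pop a inp stk o₀ =>
      obtain ⟨tail, h1, h2⟩ := ih
      refine ⟨a :: tail, ?_, List.Sublist.cons₂ a h2⟩
      rw [show o₀ ++ a :: tail = (o₀ ++ [a]) ++ tail by simp]
      exact h1

theorem srun_map (f : ℕ → ℕ) {st st' : List ℕ × List ℕ × List ℕ} (h : SRun st st') :
    SRun (st.1.map f, st.2.1.map f, st.2.2.map f)
         (st'.1.map f, st'.2.1.map f, st'.2.2.map f) := by
  induction h with
  | refl => exact .refl
  | tail _ hstep ih =>
    refine ih.tail ?_
    cases hstep with
    | push a inp s o => exact .push (f a) (inp.map f) (s.map f) (o.map f)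
    | pop a inp s o =>
      have := StackStep.pop (f a) (inp.map f) (s.map f) (o.map f)
      simpa using this

theorem srun_lift (f : ℕ → ℕ) {out : List ℕ} :
    ∀ {st : List ℕ × List ℕ × List ℕ}, SRun st ([], [], out) →
    ∀ i s o, st = (i.map f, s.map f, o.map f) →
    ∃ OUT, SRun (i, s, o) ([], [], OUT) ∧ OUT.map f = out := by
  intro st h
  induction h using Relation.ReflTransGen.head_induction_on with
  | refl =>
    intro i s o heq
    simp only [Prod.mk.injEq] at heq
    obtain ⟨h1, h2, h3⟩ := heq
    obtain rfl := List.map_eq_nil_iff.mp h1.symm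
    obtain rfl := List.map_eq_nil_iff.mp h2.symm
    exact ⟨o, .refl, h3.symm⟩
  | @head st st' hstep hrun ih =>
    intro i s o heq
    cases hstep with
    | push a inp stk o₀ =>
      simp only [Prod.mk.injEq] at heq
      obtain ⟨h1, h2, h3⟩ := heq
      obtain ⟨b, i', rfl, hfb, hmap⟩ := List.map_eq_cons_iff.mp h1.symm
      obtain ⟨OUT, hr, hmo⟩ := ih i' (b :: s) o (by simp [hmap, hfb, h2, h3])
      exact ⟨OUT, .head (.push b i' s o) hr, hmo⟩
    | pop a inp stk o₀ =>
      simp only [Prod.mk.injEq] at heq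
      obtain ⟨h1, h2, h3⟩ := heq
      obtain ⟨b, s', rfl, hfb, hmap⟩ := List.map_eq_cons_iff.mp h2.symm
      obtain ⟨OUT, hr, hmo⟩ := ih i s' (o ++ [b]) (by simp [hmap, hfb, h1, h3])
      exact ⟨OUT, .head (.pop b i s' o) hr, hmo⟩

/-- Sub-run lemma: restricting a run to a subsequence of the input (and stack). -/
theorem srun_sub {out : List ℕ} :
    ∀ {st : List ℕ × List ℕ × List ℕ}, SRun st ([], [], out) →
    ∀ u s', u.Sublist st.1 → s'.Sublist st.2.1 →
    ∃ d, SRun (u, s', []) ([], [], d) ∧ (st.2.2 ++ d).Sublist out := by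
  intro st h
  induction h using Relation.ReflTransGen.head_induction_on with
  | refl =>
    intro u s' hu hs
    obtain rfl := List.sublist_nil.mp hu
    obtain rfl := List.sublist_nil.mp hs
    exact ⟨[], .refl, by simp⟩
  | @head st st' hstep hrun ih =>
    cases hstep with
    | push a inp stk o₀ =>
      intro u s' hu hs
      rcases List.sublist_cons_iff.mp hu with hu' | ⟨u', rfl, hu'⟩
      · exact ih u s' hu' (hs.trans (List.sublist_cons_self a stk))
      · obtain ⟨d, hr, hsub⟩ := ih u' (a :: s') hu' (hs.cons₂ a)
        exact ⟨d, .head (.push a u' s' []) hr, hsub⟩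
    | pop a inp stk o₀ =>
      intro u s' hu hs
      rcases List.sublist_cons_iff.mp hs with hs' | ⟨s₂, rfl, hs₂⟩
      · obtain ⟨d, hr, hsub⟩ := ih u s' hu hs'
        refine ⟨d, hr, ?_⟩
        refine List.Sublist.trans ?_ hsub
        rw [List.append_assoc]
        exact (List.append_sublist_append_left o₀).mpr (List.sublist_cons_self a d)
      · obtain ⟨d, hr, hsub⟩ := ih u s₂ hu hs₂
        refine ⟨a :: d, ?_, ?_⟩
        · refine .head (.pop a u s₂ []) ?_
          simpa using srun_prepend [a] hr
        · rw [show o₀ ++ a :: d = (o₀ ++ [a]) ++ d by simp]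
          exact hsub

def GoodSt (st : List ℕ × List ℕ × List ℕ) : Prop :=
  st.2.1.Pairwise (· > ·) ∧ st.1.Pairwise (· < ·) ∧ ∀ a ∈ st.1, ∀ b ∈ st.2.1, b < a

theorem srun_good {st st' : List ℕ × List ℕ × List ℕ} (h : SRun st st') (hg : GoodSt st) :
    GoodSt st' := by
  induction h with
  | refl => exact hg
  | tail _ hstep ih =>
    obtain ⟨hs, hi, hrel⟩ := ih
    cases hstep with
    | push a inp s o =>
      refine ⟨List.pairwise_cons.mpr ⟨fun b hb => hrel a List.mem_cons_self b hb, hs⟩,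
        (List.pairwise_cons.mp hi).2, ?_⟩
      intro x hx b hb
      rcases List.mem_cons.mp hb with rfl | hb'
      · exact (List.pairwise_cons.mp hi).1 x hx
      · exact hrel x (List.mem_cons_of_mem a hx) b hb'
    | pop a inp s o =>
      exact ⟨(List.pairwise_cons.mp hs).2, hi,
        fun x hx b hb => hrel x hx b (List.mem_cons_of_mem a hb)⟩

theorem exists_nodup_sublist : ∀ (l : List ℕ) (S : Finset ℕ), (∀ c ∈ S, c ∈ l) →
    ∃ u : List ℕ, u.Sublist l ∧ u.Nodup ∧ u.toFinset = S := by
  intro l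
  induction l with
  | nil =>
    intro S hS
    refine ⟨[], List.Sublist.refl _, List.nodup_nil, ?_⟩
    simp only [List.toFinset_nil]
    exact (Finset.eq_empty_iff_forall_notMem.mpr (fun c hc => by simpa using hS c hc)).symm
  | cons a l' ih =>
    intro S hS
    by_cases ha : a ∈ S
    · obtain ⟨u, h1, h2, h3⟩ := ih (S.erase a) (fun c hc => by
        rcases List.mem_cons.mp (hS c (Finset.mem_of_mem_erase hc)) with rfl | h
        · exact absurd rfl (Finset.ne_of_mem_erase hc)
        · exact h)
      refine ⟨a :: u, h1.cons₂ a, ?_, ?_⟩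
      · exact List.nodup_cons.mpr ⟨fun hmem => by
          have := List.mem_toFinset.mpr hmem
          rw [h3] at this
          exact absurd rfl (Finset.ne_of_mem_erase this), h2⟩
      · rw [List.toFinset_cons, h3, Finset.insert_erase ha]
    · obtain ⟨u, h1, h2, h3⟩ := ih S (fun c hc => by
        rcases List.mem_cons.mp (hS c hc) with rfl | h
        · exact absurd hc ha
        · exact h)
      exact ⟨u, h1.cons (a := a), h2, h3⟩

theorem filter_split_sorted : ∀ (l : List ℕ), l.Pairwise (· > ·) → ∀ (P Q : ℕ → Bool),
    (∀ x y, P x = true → Q y = true → y < x) →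
    l.filter (fun x => P x || Q x) = l.filter P ++ l.filter Q := by
  intro l
  induction l with
  | nil => intro _ _ _ _; simp
  | cons a l' ih =>
    intro hl P Q hsep
    obtain ⟨ha, hl'⟩ := List.pairwise_cons.mp hl
    by_cases hP : P a = true
    · have hQa : ¬ Q a = true := fun hQ => absurd (hsep a a hP hQ) (lt_irrefl a)
      simp only [List.filter_cons, hP, Bool.true_or, if_true, ite_true, hQa, if_false]
      rw [ih hl' P Q hsep]
      simp [hQa]
    · by_cases hQ : Q a = true
      · have hPnil : l'.filter P = [] := List.filter_eq_nil_iff.mpr (fun x hx hPx =>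
          absurd (hsep x a hPx hQ) (not_lt.mpr (le_of_lt (ha x hx))))
        have hPnil' : (a :: l').filter P = [] := by
          simp [List.filter_cons, hP, hPnil]
        rw [hPnil']
        simp only [List.filter_cons, hP, hQ, Bool.false_or, if_true, List.nil_append]
        rw [ih hl' P Q hsep, hPnil]
        simp
      · simp only [List.filter_cons, hP, hQ, Bool.false_or, if_false]
        exact ih hl' P Q hsep

theorem flatten_getD (n : ℕ) : ∀ (bs : List (List ℕ)), (∀ b ∈ bs, b.length = n) →
    ∀ β i, β < bs.length → i < n →
    bs.flatten.getD (β * n + i) 0 = (bs.getD β []).getD i 0 := by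
  intro bs
  induction bs with
  | nil => intro _ β i hβ _; simp at hβ
  | cons b bs' ih =>
    intro hlen β i hβ hi
    cases β with
    | zero =>
      simp only [List.flatten_cons, Nat.zero_mul, Nat.zero_add]
      rw [List.getD_append _ _ _ _ (by rw [hlen b List.mem_cons_self]; exact hi)]
      rfl
    | succ β' =>
      simp only [List.flatten_cons]
      rw [List.getD_append_right _ _ _ _ (by
        rw [hlen b List.mem_cons_self]
        calc n ≤ (β' + 1) * n := Nat.le_mul_of_pos_left n (Nat.succ_pos β')
          _ ≤ (β' + 1) * n + i := Nat.le_add_right _ _)]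
      rw [hlen b List.mem_cons_self]
      have harith : (β' + 1) * n + i - n = β' * n + i := by ring_nf; omega
      rw [harith]
      exact ih (fun b hb => hlen b (List.mem_cons_of_mem _ hb)) β' i
        (Nat.lt_of_succ_lt_succ hβ) hi

theorem rainbow_windows_blocks (S : Finset ℕ) :
    ∀ (ds : List (List ℕ)) (r₀ : ℕ), r₀ ≤ ds.countP (fun d => decide (∀ c ∈ S, c ∈ d)) →
    ∃ us : List (List ℕ), us.length = r₀ ∧ (∀ b ∈ us, b.Nodup ∧ b.toFinset = S) ∧
      us.flatten.Sublist ds.flatten := by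
  intro ds
  induction ds with
  | nil => intro r₀ h; simp only [List.countP_nil, Nat.le_zero] at h; subst h
           exact ⟨[], rfl, by simp, by simp⟩
  | cons d ds' ih =>
    intro r₀ h
    by_cases hd : (∀ c ∈ S, c ∈ d)
    · cases r₀ with
      | zero => exact ⟨[], rfl, by simp, by simp⟩
      | succ r₁ =>
        have hcount : r₁ ≤ ds'.countP (fun d => decide (∀ c ∈ S, c ∈ d)) := by
          rw [List.countP_cons_of_pos (by simpa using hd)] at h
          omega
        obtain ⟨us', hl, hb, hsub⟩ := ih r₁ hcount
        obtain ⟨u, hu1, hu2, hu3⟩ := exists_nodup_sublist d S hd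
        refine ⟨u :: us', by simp [hl], ?_, ?_⟩
        · intro b hb'
          rcases List.mem_cons.mp hb' with rfl | hmem
          · exact ⟨hu2, hu3⟩
          · exact hb b hmem
        · simpa using List.Sublist.append hu1 hsub
    · have hcount : r₀ ≤ ds'.countP (fun d => decide (∀ c ∈ S, c ∈ d)) := by
        rw [List.countP_cons_of_neg (by simpa using hd)] at h
        exact h
      obtain ⟨us', hl, hb, hsub⟩ := ih r₀ hcount
      exact ⟨us', hl, hb, hsub.trans (by simp [List.sublist_append_right])⟩

theorem list_pigeonhole {α : Type} [DecidableEq α] (l : List α) (T : Finset α)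
    (hT : ∀ x ∈ l, x ∈ T) (k : ℕ) (hk : T.card * k < l.length) :
    ∃ S ∈ T, k < l.count S := by
  by_contra hcon
  push_neg at hcon
  have h1 : l.length = ∑ a ∈ l.toFinset, l.count a := by
    have h := Multiset.toFinset_sum_count_eq (l : Multiset α)
    simpa [Multiset.coe_count] using h.symm
  have h2 : ∑ a ∈ l.toFinset, l.count a ≤ ∑ _a ∈ l.toFinset, k := by
    refine Finset.sum_le_sum ?_
    intro a ha
    exact hcon a (hT a (List.mem_toFinset.mp ha))
  have h3 : ∑ _a ∈ l.toFinset, k = l.toFinset.card * k := by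
    simp [Finset.sum_const, smul_eq_mul]
  have h4 : l.toFinset.card ≤ T.card :=
    Finset.card_le_card (fun a ha => hT a (List.mem_toFinset.mp ha))
  have : l.length ≤ T.card * k := by
    rw [h1]
    calc ∑ a ∈ l.toFinset, l.count a ≤ l.toFinset.card * k := h2.trans (le_of_eq h3)
      _ ≤ T.card * k := Nat.mul_le_mul_right k h4
  omega


/-! ### Sock equivalence via injective relabelling maps -/

def InjOnVals (f : ℕ → ℕ) (w : List ℕ) : Prop := ∀ a ∈ w, ∀ b ∈ w, f a = f b → a = b

theorem getD_map_lt (f : ℕ → ℕ) (w : List ℕ) {i : ℕ} (hi : i < w.length) :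
    (w.map f).getD i 0 = f (w.getD i 0) := by
  rw [List.getD_eq_getElem _ _ (by simpa using hi), List.getD_eq_getElem _ _ hi,
    List.getElem_map]

theorem getD_mem_of_lt (w : List ℕ) {i : ℕ} (hi : i < w.length) : w.getD i 0 ∈ w := by
  rw [List.getD_eq_getElem _ _ hi]
  exact List.getElem_mem _

theorem sockEquiv_map {w : List ℕ} {f : ℕ → ℕ} (hf : InjOnVals f w) :
    SockEquiv w (w.map f) := by
  refine ⟨(List.length_map f).symm, fun i j hi hj => ?_⟩
  rw [getD_map_lt f w hi, getD_map_lt f w hj]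
  constructor
  · intro h; rw [h]
  · intro h
    exact hf _ (getD_mem_of_lt w hi) _ (getD_mem_of_lt w hj) h

theorem sockEquiv_exists_map {w v : List ℕ} (h : SockEquiv w v) :
    ∃ f : ℕ → ℕ, v = w.map f ∧ InjOnVals f w := by
  obtain ⟨hlen, hiff⟩ := h
  refine ⟨fun x => v.getD (w.idxOf x) 0, ?_, ?_⟩
  · have key : ∀ i, i < w.length → v.getD (w.idxOf (w.getD i 0)) 0 = v.getD i 0 := by
      intro i hi
      have hmem : w.getD i 0 ∈ w := getD_mem_of_lt w hi
      have hj : w.idxOf (w.getD i 0) < w.length := List.idxOf_lt_length_iff.mpr hmem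
      have hw : w.getD (w.idxOf (w.getD i 0)) 0 = w.getD i 0 := by
        rw [List.getD_eq_getElem _ _ hj]
        exact List.getElem_idxOf hj
      exact (hiff _ i hj hi).mp hw
    refine List.ext_getElem (by simpa using hlen.symm) ?_
    intro n h₁ h₂
    have h₃ : n < w.length := by simpa using h₂
    have := key n h₃
    rw [List.getD_eq_getElem _ _ h₁] at this
    rw [List.getElem_map]
    rw [← this]
    congr 1
    rw [List.getD_eq_getElem _ _ h₃]
  · intro a ha b hb hab
    obtain ⟨i, hi, rfl⟩ := List.getElem_of_mem ha
    obtain ⟨j, hj, rfl⟩ := List.getElem_of_mem hb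
    have ha' : w.getD i 0 = w[i] := List.getD_eq_getElem _ _ hi
    have hb' : w.getD j 0 = w[j] := List.getD_eq_getElem _ _ hj
    have keyi : v.getD (w.idxOf w[i]) 0 = v.getD i 0 := by
      have hmem : w[i] ∈ w := List.getElem_mem _
      have hk : w.idxOf w[i] < w.length := List.idxOf_lt_length_iff.mpr hmem
      have hw : w.getD (w.idxOf w[i]) 0 = w.getD i 0 := by
        rw [List.getD_eq_getElem _ _ hk, ha']
        exact List.getElem_idxOf hk
      exact (hiff _ i hk hi).mp hw
    have keyj : v.getD (w.idxOf w[j]) 0 = v.getD j 0 := by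
      have hmem : w[j] ∈ w := List.getElem_mem _
      have hk : w.idxOf w[j] < w.length := List.idxOf_lt_length_iff.mpr hmem
      have hw : w.getD (w.idxOf w[j]) 0 = w.getD j 0 := by
        rw [List.getD_eq_getElem _ _ hk, hb']
        exact List.getElem_idxOf hk
      exact (hiff _ j hk hj).mp hw
    have hv : v.getD i 0 = v.getD j 0 := by rw [← keyi, ← keyj]; exact hab
    have hw' : w.getD i 0 = w.getD j 0 := (hiff i j hi hj).mpr hv
    rw [ha', hb'] at hw'
    exact hw'

theorem sortedWordSock_equiv {w v : List ℕ} (h : SockEquiv w v) (hs : SortedWordSock w) :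
    SortedWordSock v := by
  intro i j k hij hjk hk
  have hk' : k < w.length := h.1 ▸ hk
  intro hik
  have hik' : w.getD i 0 = w.getD k 0 :=
    (h.2 i k (by omega) hk').mpr hik
  have := hs i j k hij hjk hk' hik'
  exact (h.2 i j (by omega) (by omega)).mp this

theorem sortedWordSock_sublist {u w : List ℕ} (hu : u.Sublist w) (hw : SortedWordSock w) :
    SortedWordSock u := by
  obtain ⟨g, hg⟩ := List.sublist_iff_exists_fin_orderEmbedding_get_eq.mp hu
  intro i j k hij hjk hk
  have hi : i < u.length := by omega
  have hj : j < u.length := by omega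
  have hgij : g ⟨i, hi⟩ < g ⟨j, hj⟩ := g.strictMono (by exact hij)
  have hgjk : g ⟨j, hj⟩ < g ⟨k, hk⟩ := g.strictMono (by exact hjk)
  have e1 : u.getD i 0 = w.getD (g ⟨i, hi⟩) 0 := by
    rw [List.getD_eq_getElem _ _ hi, List.getD_eq_getElem _ _ (g ⟨i, hi⟩).isLt]
    exact hg ⟨i, hi⟩
  have e2 : u.getD j 0 = w.getD (g ⟨j, hj⟩) 0 := by
    rw [List.getD_eq_getElem _ _ hj, List.getD_eq_getElem _ _ (g ⟨j, hj⟩).isLt]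
    exact hg ⟨j, hj⟩
  have e3 : u.getD k 0 = w.getD (g ⟨k, hk⟩) 0 := by
    rw [List.getD_eq_getElem _ _ hk, List.getD_eq_getElem _ _ (g ⟨k, hk⟩).isLt]
    exact hg ⟨k, hk⟩
  intro hik
  rw [e1, e3] at hik
  rw [e1, e2]
  exact hw _ _ _ hgij hgjk (g ⟨k, hk⟩).isLt hik

/-! ### foot / footIter plumbing -/

theorem footIter_succ_left (t : ℕ) (ρ : SockOrdering) :
    footIter (t + 1) ρ = ⋃ κ₁ ∈ foot ρ, footIter t κ₁ := by
  induction t generalizing ρ with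
  | zero =>
    show ⋃ κ ∈ footIter 0 ρ, foot κ = _
    simp only [footIter]
    ext κ
    simp
  | succ t ih =>
    show ⋃ κ ∈ footIter (t+1) ρ, foot κ = _
    rw [ih ρ]
    ext κ
    simp only [Set.mem_iUnion, footIter]
    constructor
    · rintro ⟨κ₂, ⟨⟨κ₁, hκ₁, hκ₂⟩, hκ⟩⟩
      exact ⟨κ₁, hκ₁, κ₂, hκ₂, hκ⟩
    · rintro ⟨κ₁, hκ₁, κ₂, hκ₂, hκ⟩
      exact ⟨κ₂, ⟨κ₁, hκ₁, hκ₂⟩, hκ⟩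

theorem isSorted_mk {w : List ℕ} :
    SockOrdering.IsSorted (⟦w⟧ : SockOrdering) ↔ SortedWordSock w := by
  constructor
  · rintro ⟨v, hv, hsv⟩
    exact sortedWordSock_equiv (Quotient.exact hv) hsv
  · intro h
    exact ⟨w, rfl, h⟩

theorem footSortable_contains :
    ∀ (t : ℕ) (ρ ρ' : SockOrdering), Contains ρ ρ' → FootSortable t ρ → FootSortable t ρ' := by
  intro t
  induction t with
  | zero =>
    rintro ρ ρ' ⟨w, u, hwρ, huw, hu⟩ ⟨κ, hκmem, hκs⟩
    have : κ = ρ := by simpa [footIter] using hκmem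
    subst this
    subst hwρ
    have hsw : SortedWordSock w := isSorted_mk.mp hκs
    refine ⟨ρ', by simp [footIter], ?_⟩
    rw [← hu, isSorted_mk]
    exact sortedWordSock_sublist huw hsw
  | succ t ih =>
    rintro ρ ρ' ⟨w, u, hwρ, huw, hu⟩ ⟨κ, hκmem, hκs⟩
    rw [footIter_succ_left] at hκmem
    rw [Set.mem_iUnion₂] at hκmem
    obtain ⟨κ₁, hκ₁, hκt⟩ := hκmem
    obtain ⟨w₁, out₁, hw₁, hrun, hout⟩ := hκ₁
    have hequiv : SockEquiv w₁ w := Quotient.exact (hw₁.trans hwρ.symm)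
    obtain ⟨f, hwf, hinj⟩ := sockEquiv_exists_map hequiv
    obtain ⟨u₁, hu₁w, hu₁⟩ := List.sublist_map_iff.mp (hwf ▸ huw)
    obtain ⟨d, hdrun, hdsub⟩ := srun_sub hrun u₁ [] (by simpa using hu₁w) (by simp)
    have hdsub' : d.Sublist out₁ := by simpa using hdsub
    have hrun₂ : IsStackOutput u (d.map f) := by
      have := srun_map f hdrun
      simpa [hu₁, IsStackOutput] using this
    have hperm : w₁.Perm out₁ := by
      have := srun_perm hrun
      simpa using this
    have hinj_out : InjOnVals f out₁ := fun a ha b hb =>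
      hinj a (hperm.mem_iff.mpr ha) b (hperm.mem_iff.mpr hb)
    have hcont : Contains κ₁ ⟦d.map f⟧ := by
      refine ⟨out₁.map f, d.map f, ?_, hdsub'.map f, rfl⟩
      rw [← hout]
      exact (Quotient.sound (sockEquiv_map hinj_out)).symm
    have hfs₁ : FootSortable t κ₁ := ⟨κ, hκt, hκs⟩
    obtain ⟨κ', hκ'mem, hκ's⟩ := ih κ₁ _ hcont hfs₁
    refine ⟨κ', ?_, hκ's⟩
    rw [footIter_succ_left, Set.mem_iUnion₂]
    exact ⟨⟦d.map f⟧, ⟨u, d.map f, hu, hrun₂, rfl⟩, hκ'mem⟩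


/-! ### positional consequences of `StratifiedWord` -/

theorem toFinset_map_eq (f : ℕ → ℕ) (l : List ℕ) :
    (l.map f).toFinset = l.toFinset.image f := by ext c; simp

theorem stratifiedWord_map {n r : ℕ} {w : List ℕ} {f : ℕ → ℕ} (hf : InjOnVals f w)
    (h : StratifiedWord n r w) : StratifiedWord n r (w.map f) := by
  obtain ⟨bs, hlen, hflat, hall⟩ := h
  refine ⟨bs.map (List.map f), by simpa using hlen, by rw [hflat, List.map_flatten], ?_⟩
  intro b' hb'
  obtain ⟨b, hb, rfl⟩ := List.mem_map.mp hb'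
  obtain ⟨h1, h2, h3⟩ := hall b hb
  refine ⟨by simpa using h1, ?_, ?_⟩
  · refine List.Nodup.map_on ?_ h2
    intro x hx y hy hxy
    have hxw : x ∈ w := by rw [hflat]; exact List.mem_flatten.mpr ⟨b, hb, hx⟩
    have hyw : y ∈ w := by rw [hflat]; exact List.mem_flatten.mpr ⟨b, hb, hy⟩
    exact hf x hxw y hyw hxy
  · rw [toFinset_map_eq, toFinset_map_eq, h3]

theorem stratifiedWord_length {n r : ℕ} {w : List ℕ} (h : StratifiedWord n r w) :
    w.length = r * n := by
  obtain ⟨bs, hlen, hflat, hall⟩ := h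
  rw [hflat, List.length_flatten]
  have : bs.map List.length = List.replicate r n := by
    refine List.eq_replicate_iff.mpr ⟨by simpa using hlen, ?_⟩
    intro x hx
    obtain ⟨b, hb, rfl⟩ := List.mem_map.mp hx
    exact (hall b hb).1
  rw [this]
  simp [List.sum_replicate, Nat.smul_one_eq_cast]

theorem stratifiedWord_card {n r : ℕ} {w : List ℕ} (h : StratifiedWord n r w) (hr : 0 < r) :
    w.toFinset.card = n := by
  obtain ⟨bs, hlen, hflat, hall⟩ := h
  have hbs : bs ≠ [] := by
    intro hnil
    rw [hnil] at hlen
    simp at hlen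
    omega
  obtain ⟨b, hb⟩ := List.exists_mem_of_ne_nil bs hbs
  obtain ⟨h1, h2, h3⟩ := hall b hb
  rw [← h3, List.toFinset_card_of_nodup h2, h1]

theorem stratifiedWord_block_getD {n r : ℕ} {w : List ℕ} (h : StratifiedWord n r w) :
    ∀ β, β < r → ∃ b : List ℕ, b.length = n ∧ b.Nodup ∧ b.toFinset = w.toFinset ∧
      ∀ i, i < n → w.getD (β * n + i) 0 = b.getD i 0 := by
  obtain ⟨bs, hlen, hflat, hall⟩ := h
  intro β hβ
  have hβ' : β < bs.length := by omega
  have hbmem : bs.getD β [] ∈ bs := by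
    rw [List.getD_eq_getElem _ _ hβ']
    exact List.getElem_mem _
  obtain ⟨h1, h2, h3⟩ := hall _ hbmem
  refine ⟨bs.getD β [], h1, h2, h3, ?_⟩
  intro i hi
  rw [hflat]
  exact flatten_getD n bs (fun b hb => (hall b hb).1) β i hβ' hi

theorem stratifiedWord_surj {n r : ℕ} {w : List ℕ} (h : StratifiedWord n r w) :
    ∀ β, β < r → ∀ c ∈ w.toFinset, ∃ x, β * n ≤ x ∧ x < β * n + n ∧ w.getD x 0 = c := by
  intro β hβ c hc
  obtain ⟨b, h1, h2, h3, h4⟩ := stratifiedWord_block_getD h β hβ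
  rw [← h3] at hc
  obtain ⟨i, hi, hgi⟩ := List.getElem_of_mem (List.mem_toFinset.mp hc)
  have hi' : i < n := by omega
  refine ⟨β * n + i, by omega, by omega, ?_⟩
  rw [h4 i hi', List.getD_eq_getElem _ _ hi, hgi]

theorem stratifiedWord_inj {n r : ℕ} {w : List ℕ} (h : StratifiedWord n r w) :
    ∀ β, β < r → ∀ x y, β * n ≤ x → x < β * n + n → β * n ≤ y → y < β * n + n →
      w.getD x 0 = w.getD y 0 → x = y := by
  intro β hβ x y hx1 hx2 hy1 hy2 hxy
  obtain ⟨b, h1, h2, h3, h4⟩ := stratifiedWord_block_getD h β hβ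
  set i := x - β * n with hidef
  set j := y - β * n with hjdef
  have hi : i < n := by omega
  have hj : j < n := by omega
  have hx : x = β * n + i := by omega
  have hy : y = β * n + j := by omega
  rw [hx, hy, h4 i hi, h4 j hj] at hxy
  have hij : i = j := by
    by_contra hne
    have hi' : i < b.length := by omega
    have hj' : j < b.length := by omega
    rw [List.getD_eq_getElem _ _ hi', List.getD_eq_getElem _ _ hj'] at hxy
    exact hne (List.Nodup.getElem_inj_iff h2 |>.mp hxy)
  omega

theorem flatten_toFinset_eq {S : Finset ℕ} :
    ∀ (us : List (List ℕ)), us ≠ [] → (∀ b ∈ us, b.toFinset = S) →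
      us.flatten.toFinset = S := by
  intro us
  induction us with
  | nil => intro h; exact absurd rfl h
  | cons b rest ih =>
    intro _ hall
    rw [List.flatten_cons, List.toFinset_append, hall b List.mem_cons_self]
    cases rest with
    | nil => simp
    | cons b' rest' =>
      rw [ih (by simp) (fun x hx => hall x (List.mem_cons_of_mem b hx))]
      simp

/-- convert a list of same-`S` rainbow blocks into a stratified word -/
theorem stratifiedWord_of_blocks {S : Finset ℕ} {r₀ : ℕ} (hr₀ : 0 < r₀)
    (us : List (List ℕ)) (hlen : us.length = r₀)
    (hall : ∀ b ∈ us, b.Nodup ∧ b.toFinset = S) :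
    StratifiedWord S.card r₀ us.flatten := by
  have hne : us ≠ [] := by
    intro h; rw [h] at hlen; simp at hlen; omega
  have hflat : us.flatten.toFinset = S := flatten_toFinset_eq us hne (fun b hb => (hall b hb).2)
  refine ⟨us, hlen, rfl, ?_⟩
  intro b hb
  obtain ⟨h1, h2⟩ := hall b hb
  exact ⟨by rw [← List.toFinset_card_of_nodup h1, h2], h1, by rw [h2, hflat]⟩


/-! ### the key one-pass lemma -/

theorem filter_chunk_split (s₁ : List ℕ) (hs : s₁.Pairwise (· > ·)) (base nsz : ℕ)
    (pred : ℕ → Bool) :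
    ∀ k, s₁.filter (fun x => decide (base ≤ x ∧ x < base + k * nsz) && pred x) =
      ((List.range k).reverse.map (fun t =>
        s₁.filter (fun x =>
          decide (base + t * nsz ≤ x ∧ x < base + t * nsz + nsz) && pred x))).flatten := by
  intro k
  induction k with
  | zero =>
    simp only [List.range_zero, List.reverse_nil, List.map_nil, List.flatten_nil]
    refine List.filter_eq_nil_iff.mpr ?_
    intro x _ hx
    rw [Bool.and_eq_true, decide_eq_true_eq] at hx
    omega
  | succ k ih =>
    have hrange : (List.range (k+1)).reverse = k :: (List.range k).reverse := by
      rw [List.range_succ, List.reverse_append]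
      simp
    rw [hrange, List.map_cons, List.flatten_cons, ← ih]
    have hsplit := filter_split_sorted s₁ hs
      (fun x => decide (base + k * nsz ≤ x ∧ x < base + k * nsz + nsz) && pred x)
      (fun x => decide (base ≤ x ∧ x < base + k * nsz) && pred x)
      (by
        intro x y hx hy
        rw [Bool.and_eq_true, decide_eq_true_eq] at hx hy
        omega)
    rw [← hsplit]
    refine List.filter_congr ?_
    intro x _
    by_cases hp : pred x = true
    · simp only [hp, Bool.and_true]
      rw [show (k+1) * nsz = k * nsz + nsz by ring]
      rw [← Bool.decide_or, decide_eq_decide]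
      omega
    · simp [hp]

/-- The "win" configuration: `r'` disjoint rainbow blocks on a common `m`-element
colour set, inside (the colours of) `tail`. -/
def WinS (m r' : ℕ) (col : ℕ → ℕ) (tail : List ℕ) : Prop :=
  ∃ S : Finset ℕ, S.card = m ∧ ∃ us : List (List ℕ), us.length = r' ∧
    (∀ b ∈ us, b.Nodup ∧ b.toFinset = S) ∧ us.flatten.Sublist (tail.map col)

theorem key_inner (n m r' : ℕ) (col : ℕ → ℕ) (F : Finset ℕ)
    (hFcard : F.card = n) (hm1 : 1 ≤ m)
    (Rtot : ℕ)
    (hsurj : ∀ β, β < Rtot → ∀ c ∈ F, ∃ x, β * n ≤ x ∧ x < β * n + n ∧ col x = c)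
    (hinj : ∀ β, β < Rtot → ∀ x y, β * n ≤ x → x < β * n + n → β * n ≤ y →
      y < β * n + n → col x = col y → x = y)
    (hcol : ∀ x, x < Rtot * n → col x ∈ F) :
    ∀ (k B : ℕ), B + k * r' ≤ Rtot →
    ∀ (s o OUT : List ℕ),
    SRun (List.range' (B * n) (k * r' * n), s, o) ([], [], OUT) →
    s.Pairwise (· > ·) → (∀ b ∈ s, b < B * n) →
    ∃ tail, OUT = o ++ tail ∧
      (WinS m r' col tail ∨
        ∃ ds : List (List ℕ), ds.length = k ∧ ds.flatten.Sublist (tail.map col) ∧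
          ∀ d ∈ ds, n + 1 - m ≤ d.toFinset.card ∧ d.toFinset ⊆ F) := by
  intro k
  induction k with
  | zero =>
    intro B hB s o OUT hrun hsort hbound
    obtain ⟨tail, htail⟩ := srun_out_mono hrun
    exact ⟨tail, htail, Or.inr ⟨[], rfl, by simp, by simp⟩⟩
  | succ k ih =>
    intro B hB s o OUT hrun hsort hbound
    -- split off the first chunk
    have hREq : List.range' (B * n) ((k+1) * r' * n) =
        List.range' (B * n) (r' * n) ++ List.range' (B * n + r' * n) (k * r' * n) := by
      rw [show B * n + r' * n = B * n + 1 * (r' * n) by ring]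
      rw [List.range'_append]
      congr 1
      ring
    rw [hREq] at hrun
    obtain ⟨s₁, o₁, hphase, hrest⟩ := srun_split hrun _ _ _ rfl
    set chunk := List.range' (B * n) (r' * n) with hchunkdef
    obtain ⟨δ, hδ0⟩ := srun_out_mono hphase
    have hδ : o₁ = o ++ δ := hδ0
    -- good invariant through the phase
    have hgood : GoodSt ([], s₁, o₁) := by
      refine srun_good hphase ⟨hsort, ?_, ?_⟩
      · exact List.pairwise_lt_range' 1 (by omega)
      · intro a ha b hb
        have := (List.mem_range'_1.mp ha).1
        have := hbound b hb
        omega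
    have hs₁sort : s₁.Pairwise (· > ·) := hgood.1
    -- multiset conservation for the phase
    have hms : (↑chunk + ↑s : Multiset ℕ) = ↑s₁ + ↑δ := by
      have hperm := srun_perm hphase
      simp only [List.append_nil, List.nil_append] at hperm
      have hcoe : (↑(chunk ++ s ++ o) : Multiset ℕ) = ↑(s₁ ++ o₁) :=
        Multiset.coe_eq_coe.mpr hperm
      rw [hδ] at hcoe
      simp only [← Multiset.coe_add] at hcoe
      have : (↑chunk + ↑s : Multiset ℕ) + ↑o = (↑s₁ + ↑δ) + ↑o := by
        calc (↑chunk + ↑s : Multiset ℕ) + ↑o = ↑chunk + ↑s + ↑o := rfl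
          _ = ↑s₁ + (↑o + ↑δ) := hcoe
          _ = (↑s₁ + ↑δ) + ↑o := by abel
      exact add_right_cancel this
    have hδmem : ∀ x, x ∈ chunk → x ∉ s₁ → x ∈ δ := by
      intro x hx hnx
      have : x ∈ (↑s₁ + ↑δ : Multiset ℕ) := by
        rw [← hms]
        exact Multiset.mem_add.mpr (Or.inl (by exact_mod_cast hx))
      rcases Multiset.mem_add.mp this with h | h
      · exact absurd (by exact_mod_cast h) hnx
      · exact_mod_cast h
    have hδsub : ∀ x ∈ δ, x ∈ chunk ∨ x ∈ s := by
      intro x hx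
      have : x ∈ (↑chunk + ↑s : Multiset ℕ) := by
        rw [hms]
        exact Multiset.mem_add.mpr (Or.inr (by exact_mod_cast hx))
      rcases Multiset.mem_add.mp this with h | h
      · exact Or.inl (by exact_mod_cast h)
      · exact Or.inr (by exact_mod_cast h)
    have hs₁mem : ∀ b ∈ s₁, b ∈ chunk ∨ b ∈ s := by
      intro b hb
      have : b ∈ (↑chunk + ↑s : Multiset ℕ) := by
        rw [hms]
        exact Multiset.mem_add.mpr (Or.inl (by exact_mod_cast hb))
      rcases Multiset.mem_add.mp this with h | h
      · exact Or.inl (by exact_mod_cast h)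
      · exact Or.inr (by exact_mod_cast h)
    have hs₁bound : ∀ b ∈ s₁, b < (B + r') * n := by
      intro b hb
      rcases hs₁mem b hb with h | h
      · have := (List.mem_range'_1.mp h).2
        have : b < B * n + r' * n := this
        nlinarith [this]
      · have := hbound b h
        nlinarith [this]
    -- the popped-colour set of this chunk
    classical
    set D : Finset ℕ := ((chunk.filter (fun x => decide (x ∉ s₁))).map col).toFinset with hDdef
    by_cases hA : m ≤ (F \ D).card
    · -- CASE 1 : a whole m-set survives on the stack; win immediately
      obtain ⟨S, hSA, hScard⟩ := Finset.exists_subset_card_eq hA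
      have hSF : S ⊆ F := hSA.trans (Finset.sdiff_subset)
      have hSin : ∀ x, x ∈ chunk → col x ∈ S → x ∈ s₁ := by
        intro x hx hcx
        by_contra hnx
        have hxD : col x ∈ D := by
          rw [hDdef]
          refine List.mem_toFinset.mpr (List.mem_map.mpr ⟨x, ?_, rfl⟩)
          exact List.mem_filter.mpr ⟨hx, by simpa using hnx⟩
        have := hSA hcx
        rw [Finset.mem_sdiff] at this
        exact this.2 hxD
      obtain ⟨tail₂, hOUT₂0, hs₁tail0⟩ := srun_stack_tail hrest
      have hOUT₂ : OUT = o₁ ++ tail₂ := hOUT₂0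
      have hs₁tail : s₁.Sublist tail₂ := hs₁tail0
      refine ⟨δ ++ tail₂, by rw [hOUT₂, hδ, List.append_assoc], Or.inl ?_⟩
      refine ⟨S, hScard, ?_⟩
      set g : ℕ → List ℕ := fun t => s₁.filter (fun x =>
        decide (B * n + t * n ≤ x ∧ x < B * n + t * n + n) && decide (col x ∈ S)) with hgdef
      refine ⟨(List.range r').reverse.map (fun t => (g t).map col), by simp, ?_, ?_⟩
      · intro b hb
        obtain ⟨t, htmem, rfl⟩ := List.mem_map.mp hb
        have ht : t < r' := List.mem_range.mp (List.mem_reverse.mp htmem)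
        have hblock : B + t < Rtot := by nlinarith [hB, ht]
        constructor
        · refine List.Nodup.map_on ?_ (List.filter_sublist.nodup hs₁sort.nodup)
          intro x hx y hy hxy
          have hx' := List.mem_filter.mp hx
          have hy' := List.mem_filter.mp hy
          rw [Bool.and_eq_true, decide_eq_true_eq, decide_eq_true_eq] at hx' hy'
          refine hinj (B + t) hblock x y ?_ ?_ ?_ ?_ hxy
          all_goals (rw [show (B + t) * n = B * n + t * n by ring]); omega
        · apply Finset.Subset.antisymm
          · intro c hc
            obtain ⟨x, hx, rfl⟩ := List.mem_map.mp (List.mem_toFinset.mp hc)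
            have hx' := List.mem_filter.mp hx
            rw [Bool.and_eq_true, decide_eq_true_eq, decide_eq_true_eq] at hx'
            exact hx'.2.2
          · intro c hc
            obtain ⟨x, hx1, hx2, hx3⟩ := hsurj (B + t) hblock c (hSF hc)
            rw [show (B + t) * n = B * n + t * n by ring] at hx1 hx2
            have hxchunk : x ∈ chunk := by
              rw [hchunkdef, List.mem_range'_1]
              constructor
              · omega
              · have : t + 1 ≤ r' := ht
                nlinarith [this]
            have hxs₁ : x ∈ s₁ := hSin x hxchunk (hx3 ▸ hc)
            refine List.mem_toFinset.mpr (List.mem_map.mpr ⟨x, ?_, hx3⟩)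
            exact List.mem_filter.mpr ⟨hxs₁, by
              rw [Bool.and_eq_true, decide_eq_true_eq, decide_eq_true_eq]
              exact ⟨⟨hx1, hx2⟩, hx3 ▸ hc⟩⟩
      · -- the flattened blocks form a sublist of the colours of the tail
        have hT := filter_chunk_split s₁ hs₁sort (B * n) n (fun x => decide (col x ∈ S)) r'
        have husmap : ((List.range r').reverse.map (fun t => (g t).map col)).flatten =
            ((List.range r').reverse.map g).flatten.map col := by
          rw [List.map_flatten, List.map_map]
          rfl
        rw [husmap, ← hT]
        refine List.Sublist.map col ?_
        refine (List.filter_sublist.trans hs₁tail).trans ?_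
        exact List.sublist_append_right δ tail₂
    · -- CASE 2 : at least n+1-m colours were popped in this chunk's window; recurse
      push_neg at hA
      have hrest' : SRun (List.range' ((B + r') * n) (k * r' * n), s₁, o₁) ([], [], OUT) := by
        rw [show (B + r') * n = B * n + r' * n by ring]
        exact hrest
      have hB' : (B + r') + k * r' ≤ Rtot := by
        have : B + (k + 1) * r' = (B + r') + k * r' := by ring
        omega
      obtain ⟨tail₂, hOUT₂, hdisj⟩ := ih (B + r') hB' s₁ o₁ OUT hrest' hs₁sort hs₁bound
      refine ⟨δ ++ tail₂, by rw [hOUT₂, hδ, List.append_assoc], ?_⟩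
      have hmapapp : (δ ++ tail₂).map col = δ.map col ++ tail₂.map col := List.map_append
      rcases hdisj with hwin | ⟨ds, hdslen, hdssub, hdsprop⟩
      · left
        obtain ⟨S, hS1, us, hus1, hus2, hus3⟩ := hwin
        exact ⟨S, hS1, us, hus1, hus2, hus3.trans (by
          rw [hmapapp]; exact List.sublist_append_right _ _)⟩
      · right
        refine ⟨δ.map col :: ds, by simp [hdslen], ?_, ?_⟩
        · rw [List.flatten_cons, hmapapp]
          exact List.Sublist.append (List.Sublist.refl _) hdssub
        · intro d hd
          rcases List.mem_cons.mp hd with rfl | hmem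
          · constructor
            · have hsubDF : F ∩ D ⊆ (δ.map col).toFinset := by
                intro c hc
                have hcD : c ∈ D := (Finset.mem_inter.mp hc).2
                rw [hDdef] at hcD
                obtain ⟨x, hx, rfl⟩ := List.mem_map.mp (List.mem_toFinset.mp hcD)
                have hx' := List.mem_filter.mp hx
                have hxδ : x ∈ δ := hδmem x hx'.1 (by simpa using hx'.2)
                exact List.mem_toFinset.mpr (List.mem_map.mpr ⟨x, hxδ, rfl⟩)
              have hcard : (F \ D).card + (F ∩ D).card = F.card :=
                Finset.card_sdiff_add_card_inter F D
              have h1 : n + 1 - m ≤ (F ∩ D).card := by omega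
              exact h1.trans (Finset.card_le_card hsubDF)
            · intro c hc
              obtain ⟨x, hx, rfl⟩ := List.mem_map.mp (List.mem_toFinset.mp hc)
              have hxlt : x < Rtot * n := by
                rcases hδsub x hx with h | h
                · have := (List.mem_range'_1.mp h).2
                  have hle : (B + r') * n ≤ Rtot * n := by
                    have h2 : B + r' ≤ Rtot := by
                      have : B + (k + 1) * r' = B + r' + k * r' := by ring
                      omega
                    exact Nat.mul_le_mul_right n h2
                  have : x < B * n + r' * n := this
                  nlinarith [this, hle]
                · have := hbound x h
                  have hle : B * n ≤ Rtot * n := Nat.mul_le_mul_right n (by omega)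
                  omega
              exact hcol x hxlt
          · exact hdsprop d hmem


/-! ### arithmetic facts about rFun and clog -/

theorem rFun_eq_of_ge {n : ℕ} (hn : 3 ≤ n) :
    rFun n = rFun ((n + 1) / 2) ^ 2 * n.choose ((n + 1) / 2) := by
  rw [rFun]
  simp [show ¬ n ≤ 2 by omega]

theorem rFun_two : rFun 2 = 2 := by rw [rFun]; simp

theorem rFun_ge_two : ∀ n, 2 ≤ rFun n := by
  intro n
  induction n using Nat.strong_induction_on with
  | _ n ih =>
    by_cases h : n ≤ 2
    · rw [rFun]; simp [h]
    · push_neg at h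
      rw [rFun_eq_of_ge (by omega)]
      have h1 : 2 ≤ rFun ((n + 1) / 2) := ih ((n + 1) / 2) (by omega)
      have h2 : 1 ≤ n.choose ((n + 1) / 2) := Nat.choose_pos (by omega)
      calc 2 ≤ 2 ^ 2 * 1 := by norm_num
        _ ≤ rFun ((n + 1) / 2) ^ 2 * n.choose ((n + 1) / 2) :=
          Nat.mul_le_mul (Nat.pow_le_pow_left h1 2) h2

/-! ### the key lemma, top level -/

theorem key_lemma (n : ℕ) (hn : 3 ≤ n) (w out : List ℕ)
    (hw : StratifiedWord n (rFun n) w) (hrun : IsStackOutput w out) :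
    ∃ u : List ℕ, u.Sublist out ∧ StratifiedWord ((n + 1) / 2) (rFun ((n + 1) / 2)) u := by
  classical
  set m := (n + 1) / 2 with hmdef
  set r' := rFun m with hr'def
  set C := n.choose m with hCdef
  have hm1 : 1 ≤ m := by omega
  have hmn : m ≤ n := by omega
  have hr'2 : 2 ≤ r' := rFun_ge_two m
  have hC1 : 0 < C := Nat.choose_pos hmn
  have hrFun : rFun n = r' * r' * C := by
    rw [rFun_eq_of_ge hn, ← hmdef, ← hr'def, ← hCdef, pow_two]
  set N := w.length with hNdef
  have hN : N = rFun n * n := stratifiedWord_length hw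
  set col : ℕ → ℕ := fun x => w.getD x 0 with hcoldef
  set F := w.toFinset with hFdef
  have hFcard : F.card = n := stratifiedWord_card hw (by have := rFun_ge_two n; omega)
  -- lift the run to the word of distinct positions
  have hWmap : (List.range' 0 N).map col = w := by
    refine List.ext_getElem (by simp [hNdef]) ?_
    intro i h1 h2
    rw [List.getElem_map]
    rw [List.getElem_range'_1]
    show col (0 + i) = w[i]
    rw [Nat.zero_add]
    exact List.getD_eq_getElem w 0 h2
  obtain ⟨OUT, hRUN, hOUTmap⟩ := srun_lift col hrun (List.range' 0 N) [] []
    (by rw [hWmap]; rfl)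
  -- apply the inner chunk analysis
  have hWeq : List.range' (0 * n) ((r' * C) * r' * n) = List.range' 0 N := by
    congr 1
    · ring
    · rw [hN, hrFun]; ring
  have hRUN' : SRun (List.range' (0 * n) ((r' * C) * r' * n), [], []) ([], [], OUT) := by
    rw [hWeq]; exact hRUN
  have hinner := key_inner n m r' col F hFcard hm1 (rFun n)
    (fun β hβ => stratifiedWord_surj hw β hβ)
    (fun β hβ => stratifiedWord_inj hw β hβ)
    (fun x hx => by
      refine List.mem_toFinset.mpr ?_
      exact getD_mem_of_lt w (by have hwl : w.length = rFun n * n := hN; omega))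
    (r' * C) 0 (by rw [hrFun]; ring_nf; omega)
    [] [] OUT hRUN' (by simp) (by simp)
  obtain ⟨tail, hOUTtail, hdisj⟩ := hinner
  have htail : OUT = tail := by simpa using hOUTtail
  have htailout : tail.map col = out := by rw [← htail]; exact hOUTmap
  rcases hdisj with hwin | ⟨ds, hdslen, hdssub, hdsprop⟩
  · obtain ⟨S, hS1, us, hus1, hus2, hus3⟩ := hwin
    refine ⟨us.flatten, ?_, ?_⟩
    · rw [← htailout]; exact hus3
    · have := stratifiedWord_of_blocks (by omega : 0 < r') us hus1 hus2
      rwa [hS1] at this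
  · -- pigeonhole over the C(n,m) possible m-subsets
    have hwincard : ∀ d ∈ ds, m ≤ d.toFinset.card := by
      intro d hd
      have := (hdsprop d hd).1
      omega
    set V : List ℕ → Finset ℕ := fun d =>
      if h : m ≤ d.toFinset.card then (Finset.exists_subset_card_eq h).choose else ∅
      with hVdef
    have hVspec : ∀ d ∈ ds, V d ⊆ d.toFinset ∧ (V d).card = m := by
      intro d hd
      have h := hwincard d hd
      rw [hVdef]
      simp only [dif_pos h]
      obtain ⟨h1, h2⟩ := (Finset.exists_subset_card_eq h).choose_spec
      exact ⟨h1, h2⟩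
    have hmapsto : ∀ x ∈ ds.map V, x ∈ Finset.powersetCard m F := by
      intro x hx
      obtain ⟨d, hd, rfl⟩ := List.mem_map.mp hx
      obtain ⟨h1, h2⟩ := hVspec d hd
      exact Finset.mem_powersetCard.mpr ⟨h1.trans (hdsprop d hd).2, h2⟩
    have hcardT : (Finset.powersetCard m F).card = C := by
      rw [Finset.card_powersetCard, hFcard]
    have hpig : ∃ S ∈ Finset.powersetCard m F, (r' - 1) < (ds.map V).count S := by
      refine list_pigeonhole (ds.map V) (Finset.powersetCard m F) hmapsto (r' - 1) ?_
      rw [hcardT]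
      have hsum : C * (r' - 1) + C = C * r' := by
        rw [← Nat.mul_succ]
        congr 1
        omega
      have hlen : (ds.map V).length = r' * C := by simpa using hdslen
      rw [hlen]
      have : C * r' = r' * C := by ring
      omega
    obtain ⟨S, hST, hcount⟩ := hpig
    have hScard : S.card = m := (Finset.mem_powersetCard.mp hST).2
    have hcountP : r' ≤ ds.countP (fun d => decide (∀ c ∈ S, c ∈ d)) := by
      have h1 : (ds.map V).count S = ds.countP (fun d => V d == S) := by
        rw [List.count, List.countP_map]
        rfl
      have h2 : ds.countP (fun d => V d == S) ≤
          ds.countP (fun d => decide (∀ c ∈ S, c ∈ d)) := by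
        refine List.countP_mono_left ?_
        intro d hd hVd
        have hVdS : V d = S := by simpa using hVd
        refine decide_eq_true ?_
        intro c hc
        have := (hVspec d hd).1
        rw [hVdS] at this
        exact List.mem_toFinset.mp (this hc)
      omega
    obtain ⟨us, hus1, hus2, hus3⟩ := rainbow_windows_blocks S ds r' hcountP
    refine ⟨us.flatten, ?_, ?_⟩
    · refine (hus3.trans hdssub).trans ?_
      rw [htailout]
    · have := stratifiedWord_of_blocks (by omega : 0 < r') us hus1 hus2
      rwa [hScard] at this


/-! ### base case n = 2 -/

theorem base_two {w : List ℕ} (hw : StratifiedWord 2 2 w) : ¬ SortedWordSock w := by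
  obtain ⟨bs, hlen, hflat, hall⟩ := hw
  obtain ⟨b1, b2, rfl⟩ := List.length_eq_two.mp hlen
  have h1 := hall b1 (by simp)
  have h2 := hall b2 (by simp)
  obtain ⟨x, y, rfl⟩ := List.length_eq_two.mp h1.1
  obtain ⟨p, q, rfl⟩ := List.length_eq_two.mp h2.1
  have hxy : x ≠ y := by
    have := h1.2.1
    simp [List.nodup_cons] at this
    exact this
  have hpq : p ≠ q := by
    have := h2.2.1
    simp [List.nodup_cons] at this
    exact this
  have hsets : ({p, q} : Finset ℕ) = {x, y} := by
    have e1 := h1.2.2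
    have e2 := h2.2.2
    simp only [List.toFinset_cons, List.toFinset_nil, Finset.insert_empty] at e1 e2
    rw [e2, ← e1]
  have hwlist : w = [x, y, p, q] := by
    rw [hflat]; simp
  have hp : p = x ∨ p = y := by
    have : p ∈ ({x, y} : Finset ℕ) := hsets ▸ (by simp : p ∈ ({p, q} : Finset ℕ))
    simpa using this
  have hq : q = x ∨ q = y := by
    have : q ∈ ({x, y} : Finset ℕ) := hsets ▸ (by simp : q ∈ ({p, q} : Finset ℕ))
    simpa using this
  intro hS
  rcases hp with hpx | hpy <;> rcases hq with hqx | hqy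
  · exact hpq (hpx.trans hqx.symm)
  · -- w = [x,y,x,y]
    subst hpx; subst hqy
    have := hS 0 1 2 (by omega) (by omega) (by rw [hwlist]; simp)
    rw [hwlist] at this
    simp [List.getD] at this
    exact hxy this
  · -- w = [x,y,y,x]
    subst hpy; subst hqx
    have := hS 0 1 3 (by omega) (by omega) (by rw [hwlist]; simp)
    rw [hwlist] at this
    simp [List.getD] at this
    exact hxy this
  · exact hpq (hpy.trans hqy.symm)

/-! ### the main theorem -/

theorem main_aux : ∀ n, 2 ≤ n → ∀ ρ : SockOrdering, IsStratified n (rFun n) ρ →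
    ¬ FootSortable (Nat.clog 2 n - 1) ρ := by
  intro n
  induction n using Nat.strong_induction_on with
  | _ n ih =>
    intro hn ρ hρ hfs
    obtain ⟨w, hwρ, hw⟩ := hρ
    rcases eq_or_lt_of_le hn with heq | hlt3
    · -- n = 2
      have hn2 : n = 2 := heq.symm
      subst hn2
      have ht : Nat.clog 2 2 - 1 = 0 := by
        rw [Nat.clog_eq_one (by norm_num) (by norm_num)]
      rw [ht] at hfs
      obtain ⟨κ, hκm, hκs⟩ := hfs
      have hκρ : κ = ρ := by simpa [footIter] using hκm
      subst hκρ
      rw [← hwρ] at hκs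
      have hsw : SortedWordSock w := isSorted_mk.mp hκs
      rw [rFun_two] at hw
      exact base_two hw hsw
    · -- 3 ≤ n
      have hn3 : 3 ≤ n := hlt3
      set m := (n + 1) / 2 with hmdef
      have hm2 : 2 ≤ m := by omega
      have hmn : m < n := by omega
      have hclog : Nat.clog 2 n = Nat.clog 2 m + 1 := by
        have h := Nat.clog_of_two_le (b := 2) (by norm_num) (by omega : 2 ≤ n)
        have : (n + 2 - 1) / 2 = m := by omega
        rw [this] at h
        exact h
      have hclogm : 1 ≤ Nat.clog 2 m := Nat.clog_pos (by norm_num) hm2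
      have ht : Nat.clog 2 n - 1 = (Nat.clog 2 m - 1) + 1 := by omega
      rw [ht] at hfs
      obtain ⟨κ, hκm, hκs⟩ := hfs
      rw [footIter_succ_left, Set.mem_iUnion₂] at hκm
      obtain ⟨κ₁, hκ₁, hκt⟩ := hκm
      obtain ⟨w₁, out₁, hw₁, hrun₁, hout₁⟩ := hκ₁
      have hequiv : SockEquiv w w₁ := Quotient.exact (hwρ.trans hw₁.symm)
      obtain ⟨f, hwf, hinj⟩ := sockEquiv_exists_map hequiv
      have hw₁s : StratifiedWord n (rFun n) w₁ := by
        rw [hwf]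
        exact stratifiedWord_map hinj hw
      obtain ⟨u, husub, hustrat⟩ := key_lemma n hn3 w₁ out₁ hw₁s hrun₁
      have hcont : Contains κ₁ ⟦u⟧ := ⟨out₁, u, hout₁, husub, rfl⟩
      have hfs₁ : FootSortable (Nat.clog 2 m - 1) κ₁ := ⟨κ, hκt, hκs⟩
      have hfsu := footSortable_contains _ _ _ hcont hfs₁
      exact ih m hmn hm2 ⟦u⟧ ⟨u, rfl, hustrat⟩ hfsu

/-- no `rFun n`-uniform stratified sock ordering with `n` colors is
`(⌈log₂ n⌉ - 1)`-foot-sortable. -/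
theorem stratified_not_footSortable (n : ℕ) (hn : 2 ≤ n) (ρ : SockOrdering)
    (hρ : IsStratified n (rFun n) ρ) : ¬ FootSortable (Nat.clog 2 n - 1) ρ :=
  main_aux n hn ρ hρ
end

section
/- For all integers n, r ≥ 2, the following inequality of real numbers holds: (nr)! / (n! · (r!)^n) ≥ n^{nr − n − 1} / r^n. -/
theorem sock_aux_A (m : ℕ) (hm : 1 ≤ m) : ∀ k, m.factorial * m ^ k ≤ (m + k).factorial := by
  intro k
  induction k with
  | zero => simp
  | succ k ih =>
    calc m.factorial * m ^ (k + 1) = (m.factorial * m ^ k) * m := by ring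
      _ ≤ (m + k).factorial * (m + k + 1) := Nat.mul_le_mul ih (by omega)
      _ = (m + (k + 1)).factorial := by
          rw [show m + (k + 1) = (m + k) + 1 by ring, Nat.factorial_succ]
          ring

theorem sock_aux_B (n : ℕ) (hn : 1 ≤ n) :
    ∀ r, 1 ≤ r → n.factorial * (r - 1).factorial ^ n * n ^ (n * (r - 1)) ≤ (n * r).factorial := by
  intro r
  induction r with
  | zero => omega
  | succ r ih =>
    intro _
    rcases Nat.eq_zero_or_pos r with h0 | hr1
    · subst h0; simp
    · have ih' := ih hr1
      have hrf : r.factorial = r * (r - 1).factorial := by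
        conv_lhs => rw [show r = (r - 1) + 1 by omega]
        rw [Nat.factorial_succ]
        congr 1
        omega
      have hA := sock_aux_A (n * r) (Nat.mul_pos (by omega) hr1) n
      calc n.factorial * (r + 1 - 1).factorial ^ n * n ^ (n * (r + 1 - 1))
          = (n.factorial * (r - 1).factorial ^ n * n ^ (n * (r - 1))) * (n * r) ^ n := by
            simp only [Nat.add_sub_cancel, hrf, mul_pow]
            rw [show n * r = n * (r - 1) + n by rw [← Nat.mul_succ]; congr 1; omega, pow_add]
            ring
        _ ≤ (n * r).factorial * (n * r) ^ n := Nat.mul_le_mul_right _ ih'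
        _ ≤ (n * r + n).factorial := hA
        _ = (n * (r + 1)).factorial := by ring_nf

/-- `(nr)! / (n! (r!)^n) ≥ n^(nr-n-1) / r^n` for `n, r ≥ 2`. -/
theorem uniform_sock_count_lower_bound (n r : ℕ) (hn : 2 ≤ n) (hr : 2 ≤ r) :
    ((n * r).factorial : ℝ) / ((n.factorial : ℝ) * (r.factorial : ℝ) ^ n) ≥
      (n : ℝ) ^ (n * r - n - 1) / (r : ℝ) ^ n := by
  have key : n.factorial * (r - 1).factorial ^ n * n ^ (n * (r - 1)) ≤ (n * r).factorial :=
    sock_aux_B n (by omega) r (by omega)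
  have hnat : n ^ (n * r - n - 1) * (n.factorial * r.factorial ^ n) ≤
      (n * r).factorial * r ^ n := by
    have hrf : r.factorial = r * (r - 1).factorial := by
      conv_lhs => rw [show r = (r - 1) + 1 by omega]
      rw [Nat.factorial_succ]
      congr 1
      omega
    calc n ^ (n * r - n - 1) * (n.factorial * r.factorial ^ n)
        = (n.factorial * (r - 1).factorial ^ n * n ^ (n * r - n - 1)) * r ^ n := by
          rw [hrf, mul_pow]; ring
      _ ≤ (n.factorial * (r - 1).factorial ^ n * n ^ (n * (r - 1))) * r ^ n := by
          apply Nat.mul_le_mul_right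
          apply Nat.mul_le_mul_left
          apply Nat.pow_le_pow_right (by omega)
          have h1 : n * r = n * (r - 1) + n := by
            rw [← Nat.mul_succ]; congr 1; omega
          omega
      _ ≤ (n * r).factorial * r ^ n := Nat.mul_le_mul_right _ key
  rw [ge_iff_le, div_le_div_iff₀ (by positivity) (by positivity)]
  have := (Nat.cast_le (α := ℝ)).mpr hnat
  push_cast at this
  linarith
end
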